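/- arXiv:2208.13813 — 11 statements merged into one kernel-verified Lean document; each statement's English description precedes it below -/
import Mathlib

section
/- Let φ: E → F be an injective interval preserving linear map between vector lattices E and F. Then φ is a lattice homomorphism. -/
open Set

/-- An injective interval preserving linear map between vector lattices
is a lattice homomorphism. -/
theorem injective_intervalPreserving_is_latticeHom
    {E F : Type*}
    [AddCommGroup E] [Lattice E] [CovariantClass E E (· + ·) (· ≤ ·)]
    [Module ℝ E] [PosSMulMono ℝ E]
    [AddCommGroup F] [Lattice F] [CovariantClass F F (· + ·) (· ≤ ·)]
    [Module ℝ F] [PosSMulMono ℝ F]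
    (φ : E →ₗ[ℝ] F)
    (hpos : ∀ x : E, 0 ≤ x → 0 ≤ φ x)
    (hip : ∀ x : E, 0 ≤ x → φ '' Icc 0 x = Icc 0 (φ x))
    (hinj : Function.Injective φ) :
    ∀ x y : E, φ (x ⊔ y) = φ x ⊔ φ y := by
  -- Step 1: φ preserves disjointness
  have key : ∀ u v : E, 0 ≤ u → 0 ≤ v → u ⊓ v = 0 → φ u ⊓ φ v = 0 := by
    intro u v hu hv huv
    set z := φ u ⊓ φ v with hz
    have hz0 : 0 ≤ z := le_inf (hpos u hu) (hpos v hv)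
    have hzu : z ∈ Icc (0 : F) (φ u) := ⟨hz0, inf_le_left⟩
    have hzv : z ∈ Icc (0 : F) (φ v) := ⟨hz0, inf_le_right⟩
    rw [← hip u hu] at hzu
    rw [← hip v hv] at hzv
    obtain ⟨a, ⟨ha0, hau⟩, ha⟩ := hzu
    obtain ⟨b, ⟨hb0, hbv⟩, hb⟩ := hzv
    have hab : a = b := hinj (by rw [ha, hb])
    have : a ≤ u ⊓ v := le_inf hau (hab ▸ hbv)
    rw [huv] at this
    have : a = 0 := le_antisymm this ha0
    rw [← ha, this, map_zero]
  -- Step 2: φ commutes with positive part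
  have hpp : ∀ a : E, φ (a⁺) = (φ a)⁺ := by
    intro a
    set p := φ (a⁺) with hp
    set n := φ (a⁻) with hn
    have hpn : p ⊓ n = 0 :=
      key _ _ (posPart_nonneg a) (negPart_nonneg a) (posPart_inf_negPart_eq_zero a)
    have hdec : φ a = p - n := by
      rw [hp, hn, ← map_sub, posPart_sub_negPart]
    have hsup : p ⊔ n = p + n := by
      have h2 := inf_add_sup p n
      rw [hpn, zero_add] at h2
      exact h2
    rw [hdec, posPart_def]
    have : (p - n) ⊔ 0 = p := by
      calc (p - n) ⊔ 0 = (p - n) ⊔ (n - n) := by rw [sub_self]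
        _ = (p ⊔ n) - n := by
            simp only [sub_eq_add_neg, ← sup_add]
        _ = p := by rw [hsup, add_sub_cancel_right]
    rw [this]
  -- Main proof
  intro x y
  have h1 : x ⊔ y = y + (x - y)⁺ := by
    rw [posPart_def, add_sup, add_zero, add_sub_cancel, sup_comm]
  have h2 : φ x ⊔ φ y = φ y + (φ x - φ y)⁺ := by
    rw [posPart_def, add_sup, add_zero, add_sub_cancel, sup_comm]
  rw [h1, h2, map_add, hpp, map_sub]
end

section
/- Let E, E′, F, F′ be vector lattices and suppose given maps ψ: E → F, φ_E: E → E′, φ_F: F → F′ and ψ′: E′ → F′ satisfying ψ′ ∘ φ_E = φ_F ∘ ψ, where φ_E is a positive linear map with φ_E(E⁺) = (E′)⁺, and φ_F is a surjective lattice homomorphism. If ψ is an interval preserving linear map, then ψ′ is an interval preserving linear map. -/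
open Set

/-- Pushing the interval preserving property down a commutative square:
if `ψ' ∘ φ_E = φ_F ∘ ψ` with `φ_E` positive linear and `φ_E(E⁺) = (E')⁺`, `φ_F` a surjective
lattice homomorphism, and `ψ` an interval preserving linear map, then the map `ψ'` is an
interval preserving linear map. -/
theorem pushing_down_intervalPreserving
    {E E' F F' : Type*}
    [AddCommGroup E] [Lattice E] [CovariantClass E E (· + ·) (· ≤ ·)]
    [Module ℝ E] [PosSMulMono ℝ E]
    [AddCommGroup E'] [Lattice E'] [CovariantClass E' E' (· + ·) (· ≤ ·)]
    [Module ℝ E'] [PosSMulMono ℝ E']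
    [AddCommGroup F] [Lattice F] [CovariantClass F F (· + ·) (· ≤ ·)]
    [Module ℝ F] [PosSMulMono ℝ F]
    [AddCommGroup F'] [Lattice F'] [CovariantClass F' F' (· + ·) (· ≤ ·)]
    [Module ℝ F'] [PosSMulMono ℝ F']
    (ψ : E →ₗ[ℝ] F) (φE : E →ₗ[ℝ] E') (φF : F →ₗ[ℝ] F') (ψ' : E' → F')
    (hcomm : ∀ x : E, ψ' (φE x) = φF (ψ x))
    (hφE_pos : ∀ x : E, 0 ≤ x → 0 ≤ φE x)
    (hφE_cone : φE '' {x : E | 0 ≤ x} = {y : E' | 0 ≤ y})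
    (hφF_hom : ∀ x y : F, φF (x ⊔ y) = φF x ⊔ φF y)
    (hφF_surj : Function.Surjective φF)
    (hψ_pos : ∀ x : E, 0 ≤ x → 0 ≤ ψ x)
    (hψ_ip : ∀ x : E, 0 ≤ x → ψ '' Icc 0 x = Icc 0 (ψ x)) :
    (∀ a b : E', ψ' (a + b) = ψ' a + ψ' b) ∧
    (∀ (c : ℝ) (a : E'), ψ' (c • a) = c • ψ' a) ∧
    (∀ a : E', 0 ≤ a → 0 ≤ ψ' a) ∧
    (∀ a : E', 0 ≤ a → ψ' '' Icc 0 a = Icc 0 (ψ' a)) := by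
  -- φE is surjective
  have hpos_surj : ∀ a : E', 0 ≤ a → ∃ x : E, 0 ≤ x ∧ φE x = a := by
    intro a ha
    have : a ∈ φE '' {x : E | 0 ≤ x} := by rw [hφE_cone]; exact ha
    obtain ⟨x, hx, hxa⟩ := this
    exact ⟨x, hx, hxa⟩
  have hsurj : ∀ a : E', ∃ x : E, φE x = a := by
    intro a
    obtain ⟨x, _, hx⟩ := hpos_surj a⁺ (posPart_nonneg a)
    obtain ⟨y, _, hy⟩ := hpos_surj a⁻ (negPart_nonneg a)
    exact ⟨x - y, by rw [map_sub, hx, hy, posPart_sub_negPart]⟩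
  -- key formula
  have hval : ∀ x : E, ψ' (φE x) = φF (ψ x) := hcomm
  -- φF positive
  have hφF_pos : ∀ y : F, 0 ≤ y → 0 ≤ φF y := by
    intro y hy
    have := hφF_hom y 0
    rw [sup_eq_left.2 hy, map_zero] at this
    rw [this]; exact le_sup_right
  -- φF preserves inf
  have hφF_inf : ∀ x y : F, φF (x ⊓ y) = φF x ⊓ φF y := by
    intro x y
    have h1 : x ⊓ y = x + y - x ⊔ y := by
      rw [eq_sub_iff_add_eq, inf_add_sup]
    have h2 : φF x ⊓ φF y = φF x + φF y - φF x ⊔ φF y := by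
      rw [eq_sub_iff_add_eq, inf_add_sup]
    rw [h1, h2, map_sub, map_add, hφF_hom]
  have hadd : ∀ a b : E', ψ' (a + b) = ψ' a + ψ' b := by
    intro a b
    obtain ⟨x, rfl⟩ := hsurj a
    obtain ⟨y, rfl⟩ := hsurj b
    rw [← map_add, hval, hval, hval, map_add, map_add]
  have hsmul : ∀ (c : ℝ) (a : E'), ψ' (c • a) = c • ψ' a := by
    intro c a
    obtain ⟨x, rfl⟩ := hsurj a
    rw [← map_smul, hval, hval, map_smul, map_smul]
  have hmono : ∀ a : E', 0 ≤ a → 0 ≤ ψ' a := by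
    intro a ha
    obtain ⟨x, hx, rfl⟩ := hpos_surj a ha
    rw [hval]
    exact hφF_pos _ (hψ_pos _ hx)
  refine ⟨hadd, hsmul, hmono, ?_⟩
  intro a ha
  obtain ⟨x, hx, rfl⟩ := hpos_surj a ha
  apply Set.Subset.antisymm
  · rintro w ⟨b, ⟨hb0, hba⟩, rfl⟩
    refine ⟨hmono b hb0, ?_⟩
    obtain ⟨z, hz, rfl⟩ := hpos_surj b hb0
    have hd : (0:E') ≤ φE x - φE z := sub_nonneg.2 hba
    obtain ⟨y, hy, hyd⟩ := hpos_surj _ hd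
    have hax : φE x = φE (z + y) := by rw [map_add, hyd]; abel
    rw [hax, hval, hval, map_add, map_add]
    exact le_add_of_nonneg_right (hφF_pos _ (hψ_pos _ hy))
  · rintro w ⟨hw0, hwa⟩
    rw [hval] at hwa
    obtain ⟨u, hu⟩ := hφF_surj w
    set u' : F := (u ⊔ 0) ⊓ ψ x with hu'def
    have hu'mem : u' ∈ Icc (0:F) (ψ x) :=
      ⟨le_inf le_sup_right (hψ_pos _ hx), inf_le_right⟩
    have hu'val : φF u' = w := by
      rw [hu'def, hφF_inf, hφF_hom, map_zero, hu, sup_eq_left.2 hw0,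
        inf_eq_left.2 hwa]
    obtain ⟨z, hz, hzu⟩ := by
      have := (hψ_ip x hx).symm ▸ hu'mem
      exact this
    refine ⟨φE z, ⟨hφE_pos _ hz.1, ?_⟩, ?_⟩
    · exact sub_nonneg.1 (by rw [← map_sub]; exact hφE_pos _ (sub_nonneg.2 hz.2))
    · rw [hval, hzu, hu'val]
end

section
/- Let I be a (not necessarily directed) nonempty index set, let (E_i)_{i∈I} be vector lattices, and let φ_i: E_i → E be interval preserving linear maps into a vector lattice E such that E = ⋃_i φ_i(E_i). Let χ: E → F be a linear map into a vector lattice F. Then χ is interval preserving if and only if every composition χ ∘ φ_i: E_i → F is interval preserving. -/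
open Set

/-- Let `φ_i : E_i → G` be interval preserving linear maps between vector
lattices with `G = ⋃_i φ_i(E_i)`, and let `χ : G → F` be linear. Then `χ` is interval
preserving iff every `χ ∘ φ_i` is interval preserving. -/
theorem factoring_map_intervalPreserving
    {ι : Type*} [Nonempty ι]
    (E : ι → Type*)
    [∀ i, AddCommGroup (E i)] [∀ i, Lattice (E i)]
    [∀ i, CovariantClass (E i) (E i) (· + ·) (· ≤ ·)]
    [∀ i, Module ℝ (E i)] [∀ i, PosSMulMono ℝ (E i)]
    {G F : Type*}
    [AddCommGroup G] [Lattice G] [CovariantClass G G (· + ·) (· ≤ ·)]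
    [Module ℝ G] [PosSMulMono ℝ G]
    [AddCommGroup F] [Lattice F] [CovariantClass F F (· + ·) (· ≤ ·)]
    [Module ℝ F] [PosSMulMono ℝ F]
    (φ : ∀ i, E i →ₗ[ℝ] G)
    (hφ_pos : ∀ i, ∀ x : E i, 0 ≤ x → 0 ≤ φ i x)
    (hφ_ip : ∀ i, ∀ x : E i, 0 ≤ x → (φ i) '' Icc 0 x = Icc 0 (φ i x))
    (hcover : ∀ g : G, ∃ (i : ι) (x : E i), φ i x = g)
    (χ : G →ₗ[ℝ] F) :
    ((∀ g : G, 0 ≤ g → 0 ≤ χ g) ∧ ∀ g : G, 0 ≤ g → χ '' Icc 0 g = Icc 0 (χ g)) ↔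
      ∀ i, (∀ x : E i, 0 ≤ x → 0 ≤ χ (φ i x)) ∧
        ∀ x : E i, 0 ≤ x → (fun e => χ (φ i e)) '' Icc 0 x = Icc 0 (χ (φ i x)) := by
  constructor
  · rintro ⟨hpos, hip⟩ i
    refine ⟨fun x hx => hpos _ (hφ_pos i x hx), fun x hx => ?_⟩
    have : (fun e => χ (φ i e)) '' Icc 0 x = χ '' ((φ i) '' Icc 0 x) := by
      rw [image_image]
    rw [this, hφ_ip i x hx, hip _ (hφ_pos i x hx)]
  · intro h
    -- key: every g ≥ 0 is φ i y for some y ≥ 0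
    have key : ∀ g : G, 0 ≤ g → ∃ (i : ι) (y : E i), 0 ≤ y ∧ φ i y = g := by
      intro g hg
      obtain ⟨i, x, hx⟩ := hcover g
      have hxpos : (0 : E i) ≤ x ⊔ 0 := le_sup_right
      have hφmono : φ i x ≤ φ i (x ⊔ 0) := by
        have := hφ_pos i (x ⊔ 0 - x) (by simp [sub_nonneg, le_sup_left])
        rw [map_sub, sub_nonneg] at this
        exact this
      have hmem : g ∈ Icc 0 (φ i (x ⊔ 0)) := ⟨hg, hx ▸ hφmono⟩
      rw [← hφ_ip i _ hxpos] at hmem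
      obtain ⟨y, ⟨hy0, _⟩, hyg⟩ := hmem
      exact ⟨i, y, hy0, hyg⟩
    have hpos : ∀ g : G, 0 ≤ g → 0 ≤ χ g := by
      intro g hg
      obtain ⟨i, y, hy0, rfl⟩ := key g hg
      exact (h i).1 y hy0
    refine ⟨hpos, fun g hg => ?_⟩
    apply Subset.antisymm
    · rintro _ ⟨a, ⟨ha0, hag⟩, rfl⟩
      refine ⟨hpos a ha0, ?_⟩
      have := hpos (g - a) (by simp [sub_nonneg, hag])
      rw [map_sub, sub_nonneg] at this
      exact this
    · rintro f hf
      obtain ⟨i, y, hy0, rfl⟩ := key g hg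
      have : f ∈ (fun e => χ (φ i e)) '' Icc 0 y := by rw [(h i).2 y hy0]; exact hf
      obtain ⟨z, hz, rfl⟩ := this
      refine ⟨φ i z, ?_, rfl⟩
      rw [← hφ_ip i y hy0]
      exact mem_image_of_mem _ hz
end

section
/- Let φ: E → F be a continuous positive linear map between normed lattices E and F, and suppose that every order interval [0,x]_E (x ∈ E⁺) is compact in the weak topology of E. If φ is almost interval preserving, then φ is interval preserving. -/
/-!
The continuous map `φ` stays continuous for the weak topologies, so it sends the weakly compact
interval `[0, x]` onto a weakly compact set. The weak topology is Hausdorff (Hahn–Banach) and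
coarser than the norm topology, so that image is norm closed, and the closure in the almost
interval preserving condition changes nothing.
-/

open Set

theorem IsCompact.toWeakSpace_image_map {𝕜 E F : Type*} [CommSemiring 𝕜] [TopologicalSpace 𝕜]
    [ContinuousAdd 𝕜] [ContinuousConstSMul 𝕜 𝕜] [AddCommMonoid E] [Module 𝕜 E]
    [TopologicalSpace E] [AddCommMonoid F] [Module 𝕜 F] [TopologicalSpace F] {s : Set E}
    (hs : IsCompact (toWeakSpace 𝕜 E '' s)) (φ : E →L[𝕜] F) :
    IsCompact (toWeakSpace 𝕜 F '' (φ '' s)) := by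
  convert hs.image (WeakSpace.map φ).continuous using 1
  simp only [image_image]
  rfl

theorem IsCompact.isClosed_of_toWeakSpace {𝕜 E : Type*} [CommRing 𝕜] [TopologicalSpace 𝕜]
    [T2Space 𝕜] [ContinuousAdd 𝕜] [ContinuousConstSMul 𝕜 𝕜] [AddCommGroup E] [Module 𝕜 E]
    [TopologicalSpace E] [SeparatingDual 𝕜 E] {s : Set E}
    (hs : IsCompact (toWeakSpace 𝕜 E '' s)) : IsClosed s := by
  have hpre : toWeakSpaceCLM 𝕜 E ⁻¹' (toWeakSpace 𝕜 E '' s) = s :=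
    (toWeakSpace 𝕜 E).toEquiv.preimage_image s
  exact hpre ▸ hs.isClosed.preimage (toWeakSpaceCLM 𝕜 E).continuous

theorem almostIntervalPreserving_of_weaklyCompact_intervals_is_intervalPreserving_general
    {E F : Type*}
    [NormedAddCommGroup E] [Lattice E] [NormedSpace ℝ E]
    [NormedAddCommGroup F] [Lattice F] [NormedSpace ℝ F]
    (φ : E →L[ℝ] F)
    (hwc : ∀ x : E, 0 ≤ x → IsCompact (toWeakSpace ℝ E '' Icc 0 x))
    (haip : ∀ x : E, 0 ≤ x → Icc (0 : F) (φ x) = closure (φ '' Icc 0 x)) :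
    ∀ x : E, 0 ≤ x → φ '' Icc 0 x = Icc 0 (φ x) := by
  intro x hx
  have hclosed : IsClosed (φ '' Icc 0 x) :=
    ((hwc x hx).toWeakSpace_image_map φ).isClosed_of_toWeakSpace
  rw [haip x hx, hclosed.closure_eq]

/-- If `φ : E → F` is a continuous positive linear map between normed
lattices, order intervals in `E` are weakly compact, and `φ` is almost interval
preserving, then `φ` is interval preserving. -/
theorem almostIntervalPreserving_of_weaklyCompact_intervals_is_intervalPreserving
    {E F : Type*}
    [NormedAddCommGroup E] [Lattice E] [HasSolidNorm E] [IsOrderedAddMonoid E] [NormedSpace ℝ E]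
    [NormedAddCommGroup F] [Lattice F] [HasSolidNorm F] [IsOrderedAddMonoid F] [NormedSpace ℝ F]
    (φ : E →L[ℝ] F)
    (hpos : ∀ x : E, 0 ≤ x → 0 ≤ φ x)
    (hwc : ∀ x : E, 0 ≤ x → IsCompact (toWeakSpace ℝ E '' Icc 0 x))
    (haip : ∀ x : E, 0 ≤ x → Icc (0 : F) (φ x) = closure (φ '' Icc 0 x)) :
    ∀ x : E, 0 ≤ x → φ '' Icc 0 x = Icc 0 (φ x) :=
  almostIntervalPreserving_of_weaklyCompact_intervals_is_intervalPreserving_general φ hwc haip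
end

section
/- Let φ: E → F be an almost interval preserving linear map from a vector lattice E into a normed lattice F, and let I be an ideal in E. Then the norm closure of φ(I) is an ideal in F, and the positive cone of this closure equals the norm closure of φ(I ∩ E⁺). -/
open Set

/-!
Write `J` for the closure of `φ(I)` and `P` for the closure of `φ(I ∩ E⁺)`. For `x ∈ I ∩ E⁺`,
almost interval preservation and solidity of `I` give `[0, φ x] ⊆ P`; by continuity of
`u ⊓ ·` this persists for every `p ∈ P`. Positivity gives `|φ x| ≤ φ |x|` with `|x| ∈ I ∩ E⁺`,
so by continuity `|·|` maps `J` into `P`. Hence `J ∩ F⁺ = P`, and if `|u| ≤ |v|` with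
`v ∈ J`, then `u⁺` and `u⁻` lie in `[0, |v|] ⊆ P ⊆ J`, so `u = u⁺ - u⁻ ∈ J`.
-/

theorem abs_apply_le_apply_abs {α β G : Type*} [AddGroup α] [Lattice α] [AddRightMono α]
    [AddGroup β] [Lattice β] [AddRightMono β] [FunLike G α β] [AddMonoidHomClass G α β]
    (f : G) (hf : ∀ a, 0 ≤ a → 0 ≤ f a) (a : α) : |f a| ≤ f |a| := by
  have hmono : ∀ b, b ≤ |a| → f b ≤ f |a| := fun b hb =>
    sub_nonneg.1 (by simpa only [map_sub] using hf _ (sub_nonneg.2 hb))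
  exact abs_le'.2 ⟨hmono a (le_abs_self a), by simpa only [map_neg] using hmono (-a) (neg_le_abs a)⟩

theorem Icc_subset_closure_of_mem_closure {α : Type*} [Lattice α] [Zero α] [TopologicalSpace α]
    [ContinuousInf α] {A : Set α} (hA : ∀ a ∈ A, 0 ≤ a ∧ Icc 0 a ⊆ closure A) {p : α}
    (hp : p ∈ closure A) : Icc 0 p ⊆ closure A := by
  rintro u ⟨hu, hup⟩
  have hinf : u ⊓ p ∈ closure (closure A) :=
    map_mem_closure (continuous_const.inf continuous_id) hp fun a ha =>
      (hA a ha).2 ⟨le_inf hu (hA a ha).1, inf_le_right⟩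
  rwa [closure_closure, inf_eq_left.2 hup] at hinf

theorem Icc_apply_subset_closure_image_nonneg {E F : Type*} [AddGroup E] [Lattice E]
    [AddLeftMono E] [Preorder F] [Zero F] [TopologicalSpace F] {φ : E → F} {I : Set E}
    (haip : ∀ x : E, 0 ≤ x → Icc (0 : F) (φ x) = closure (φ '' Icc 0 x))
    (hI : ∀ x y : E, y ∈ I → |x| ≤ |y| → x ∈ I) {x : E} (hx : x ∈ I) (hx0 : 0 ≤ x) :
    Icc 0 (φ x) ⊆ closure (φ '' {x | x ∈ I ∧ 0 ≤ x}) := by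
  rw [haip x hx0]
  refine closure_mono (image_mono fun z hz => ⟨hI z x hx ?_, hz.1⟩)
  rw [abs_of_nonneg hz.1, abs_of_nonneg hx0]
  exact hz.2

theorem abs_mem_closure_image_nonneg {E F G : Type*} [AddCommGroup E] [Lattice E]
    [AddLeftMono E] [AddCommGroup F] [Lattice F] [AddLeftMono F] [TopologicalSpace F]
    [ContinuousSup F] [ContinuousNeg F] [FunLike G E F] [AddMonoidHomClass G E F] {φ : G} {I : Set E}
    (hpos : ∀ x : E, 0 ≤ x → 0 ≤ φ x)
    (haip : ∀ x : E, 0 ≤ x → Icc (0 : F) (φ x) = closure (φ '' Icc 0 x))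
    (hI : ∀ x y : E, y ∈ I → |x| ≤ |y| → x ∈ I) {v : F} (hv : v ∈ closure (φ '' I)) :
    |v| ∈ closure (φ '' {x | x ∈ I ∧ 0 ≤ x}) := by
  have hmaps : MapsTo (|·|) (φ '' I) (closure (φ '' {x | x ∈ I ∧ 0 ≤ x})) := by
    rintro - ⟨x, hx, rfl⟩
    exact Icc_apply_subset_closure_image_nonneg haip hI (hI |x| x hx (abs_abs x).le)
      (abs_nonneg x) ⟨abs_nonneg _, abs_apply_le_apply_abs φ hpos x⟩
  have habs := map_mem_closure (f := (|·|)) (continuous_id.sup continuous_neg) hv hmaps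
  rwa [closure_closure] at habs

theorem closure_image_of_ideal_is_ideal_general
    {E F : Type*}
    [AddCommGroup E] [Lattice E] [CovariantClass E E (· + ·) (· ≤ ·)]
    [Module ℝ E]
    [NormedAddCommGroup F] [Lattice F] [HasSolidNorm F] [IsOrderedAddMonoid F]
    [NormedSpace ℝ F]
    (φ : E →ₗ[ℝ] F)
    (hpos : ∀ x : E, 0 ≤ x → 0 ≤ φ x)
    (haip : ∀ x : E, 0 ≤ x → Icc (0 : F) (φ x) = closure (φ '' Icc 0 x))
    (I : Submodule ℝ E)
    (hI : ∀ x y : E, y ∈ I → |x| ≤ |y| → x ∈ I) :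
    ((0 : F) ∈ closure (φ '' (I : Set E)) ∧
      (∀ u v : F, u ∈ closure (φ '' (I : Set E)) → v ∈ closure (φ '' (I : Set E)) →
        u + v ∈ closure (φ '' (I : Set E))) ∧
      (∀ (c : ℝ) (u : F), u ∈ closure (φ '' (I : Set E)) → c • u ∈ closure (φ '' (I : Set E))) ∧
      (∀ u v : F, v ∈ closure (φ '' (I : Set E)) → |u| ≤ |v| →
        u ∈ closure (φ '' (I : Set E)))) ∧
    {y : F | y ∈ closure (φ '' (I : Set E)) ∧ 0 ≤ y} =
      closure (φ '' {x : E | x ∈ I ∧ 0 ≤ x}) := by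
  set P := closure (φ '' {x : E | x ∈ I ∧ 0 ≤ x})
  set J := (I.map φ).topologicalClosure
  have hJ : (J : Set F) = closure (φ '' I) := Submodule.topologicalClosure_coe _
  have hPJ : P ⊆ J := hJ ▸ closure_mono (image_mono fun x hx => hx.1)
  have hP : ∀ p ∈ P, Icc 0 p ⊆ P := fun p => Icc_subset_closure_of_mem_closure <| by
    rintro - ⟨x, ⟨hx, hx0⟩, rfl⟩
    exact ⟨hpos x hx0, Icc_apply_subset_closure_image_nonneg haip hI hx hx0⟩
  have habs : ∀ v ∈ J, |v| ∈ P := fun v hv =>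
    abs_mem_closure_image_nonneg (I := I) hpos haip hI (hJ ▸ hv)
  simp only [← hJ, SetLike.mem_coe]
  refine ⟨⟨J.zero_mem, fun u v => J.add_mem, fun c u => J.smul_mem c, fun u v hv huv => ?_⟩, ?_⟩
  · have hdom : ∀ w, 0 ≤ w → w ≤ |u| → w ∈ J := fun w hw0 hwu =>
      hPJ (hP _ (habs v hv) ⟨hw0, hwu.trans huv⟩)
    rw [← posPart_sub_negPart u]
    exact J.sub_mem (hdom _ (posPart_nonneg u) (sup_le (le_abs_self u) (abs_nonneg u)))
      (hdom _ (negPart_nonneg u) (sup_le (neg_le_abs u) (abs_nonneg u)))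
  · ext y
    refine ⟨fun ⟨hy, hy0⟩ => abs_of_nonneg hy0 ▸ habs y hy, fun hy => ⟨hPJ hy, ?_⟩⟩
    refine closure_minimal ?_ isClosed_nonneg hy
    rintro - ⟨x, ⟨-, hx0⟩, rfl⟩
    exact hpos x hx0

/-- If `φ : E → F` is an almost interval preserving linear map from a
vector lattice into a normed lattice and `I` is an ideal in `E`, then the norm closure of
`φ(I)` is an ideal in `F` whose positive cone equals the norm closure of `φ(I ∩ E⁺)`. -/
theorem closure_image_of_ideal_is_ideal
    {E F : Type*}
    [AddCommGroup E] [Lattice E] [CovariantClass E E (· + ·) (· ≤ ·)]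
    [Module ℝ E] [PosSMulMono ℝ E]
    [NormedAddCommGroup F] [Lattice F] [HasSolidNorm F] [IsOrderedAddMonoid F]
    [NormedSpace ℝ F]
    (φ : E →ₗ[ℝ] F)
    (hpos : ∀ x : E, 0 ≤ x → 0 ≤ φ x)
    (haip : ∀ x : E, 0 ≤ x → Icc (0 : F) (φ x) = closure (φ '' Icc 0 x))
    (I : Submodule ℝ E)
    (hI : ∀ x y : E, y ∈ I → |x| ≤ |y| → x ∈ I) :
    ((0 : F) ∈ closure (φ '' (I : Set E)) ∧
      (∀ u v : F, u ∈ closure (φ '' (I : Set E)) → v ∈ closure (φ '' (I : Set E)) →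
        u + v ∈ closure (φ '' (I : Set E))) ∧
      (∀ (c : ℝ) (u : F), u ∈ closure (φ '' (I : Set E)) → c • u ∈ closure (φ '' (I : Set E))) ∧
      (∀ u v : F, v ∈ closure (φ '' (I : Set E)) → |u| ≤ |v| →
        u ∈ closure (φ '' (I : Set E)))) ∧
    {y : F | y ∈ closure (φ '' (I : Set E)) ∧ 0 ≤ y} =
      closure (φ '' {x : E | x ∈ I ∧ 0 ≤ x}) :=
  closure_image_of_ideal_is_ideal_general φ hpos haip I hI
end

section
/- Let φ: E → F be a lattice homomorphism from a vector lattice E into a normed lattice F. Then φ is almost interval preserving if and only if the norm closure of φ(E) is an ideal in F. -/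
/-!
The closure of the range is always a subspace, so being an ideal amounts to being solid.
For a lattice homomorphism `φ`, the maps `y ↦ w ⊓ |y|` and `y ↦ (y ⊔ 0) ⊓ φ x` send `range φ`
into sets controlled by the order intervals `[0, φ z]`, and by continuity of the lattice
operations they send the closure of the range into the corresponding closures. If `φ` is almost
interval preserving, the first map shows that every `0 ≤ w ≤ |v|` with `v` in the closed range
lies in it, and `u = u⁺ - u⁻` then gives solidity. Conversely, if the closed range is solid, every
`u ∈ [0, φ x]` lies in it, and the second map exhibits `u` as a limit of points of `φ [0, x]`.
-/

open Set LatticeOrderedAddCommGroup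

section LatticeHom

variable {E F G : Type*} [AddCommGroup E] [Lattice E] [AddCommGroup F] [Lattice F]
  [FunLike G E F] [AddMonoidHomClass G E F] {φ : G}

theorem map_inf_of_map_sup [AddLeftMono E] [AddLeftMono F]
    (hφ : ∀ x y, φ (x ⊔ y) = φ x ⊔ φ y) (x y : E) : φ (x ⊓ y) = φ x ⊓ φ y := by
  rw [eq_sub_of_add_eq (inf_add_sup x y), eq_sub_of_add_eq (inf_add_sup (φ x) (φ y)),
    map_sub, map_add, hφ]

theorem map_abs_of_map_sup (hφ : ∀ x y, φ (x ⊔ y) = φ x ⊔ φ y) (x : E) : φ |x| = |φ x| := by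
  rw [abs, abs, hφ, map_neg]

end LatticeHom

theorem AddSubgroup.isSolid_of_forall_nonneg_le_abs {F : Type*} [AddCommGroup F] [Lattice F]
    [AddLeftMono F] (S : AddSubgroup F)
    (hS : ∀ v ∈ S, ∀ w, 0 ≤ w → w ≤ |v| → w ∈ S) : IsSolid (S : Set F) := by
  intro v hv u huv
  rw [← posPart_sub_negPart u]
  have hpos : u⁺ ≤ |u| := sup_le (le_abs_self u) (abs_nonneg u)
  have hneg : u⁻ ≤ |u| := sup_le (neg_le_abs u) (abs_nonneg u)
  exact S.sub_mem (hS v hv _ (posPart_nonneg u) (hpos.trans huv))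
    (hS v hv _ (negPart_nonneg u) (hneg.trans huv))

def IsAlmostIntervalPreserving {E F : Type*} [Zero E] [Preorder E] [Zero F] [Preorder F]
    [TopologicalSpace F] (φ : E → F) : Prop :=
  (∀ x, 0 ≤ x → 0 ≤ φ x) ∧ ∀ x, 0 ≤ x → Icc 0 (φ x) = closure (φ '' Icc 0 x)

section Topological

variable {E F G : Type*} [AddCommGroup E] [Lattice E] [AddLeftMono E]
  [AddCommGroup F] [Lattice F] [TopologicalSpace F] [TopologicalLattice F]
  [FunLike G E F] [AddMonoidHomClass G E F] {φ : G}

theorem IsAlmostIntervalPreserving.mem_closure_range_of_nonneg_of_le_abs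
    [ContinuousNeg F] (hφ : IsAlmostIntervalPreserving φ) (hsup : ∀ x y, φ (x ⊔ y) = φ x ⊔ φ y)
    {v w : F} (hv : v ∈ closure (range φ)) (hw : 0 ≤ w) (hwv : w ≤ |v|) :
    w ∈ closure (range φ) := by
  have hcont : Continuous fun y : F => w ⊓ |y| :=
    continuous_const.inf (continuous_id.sup continuous_neg)
  have hmaps : MapsTo (fun y : F => w ⊓ |y|) (range φ) (closure (range φ)) := by
    rintro _ ⟨x, rfl⟩
    have hx : w ⊓ φ |x| ∈ Icc 0 (φ |x|) :=
      ⟨le_inf hw (hφ.1 _ (abs_nonneg x)), inf_le_right⟩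
    rw [hφ.2 _ (abs_nonneg x), map_abs_of_map_sup hsup] at hx
    exact closure_mono (image_subset_range _ _) hx
  simpa [closure_closure, inf_eq_left.mpr hwv] using map_mem_closure hcont hv hmaps

theorem IsAlmostIntervalPreserving.isSolid_closure_range
    [AddLeftMono F] [IsTopologicalAddGroup F] (hφ : IsAlmostIntervalPreserving φ)
    (hsup : ∀ x y, φ (x ⊔ y) = φ x ⊔ φ y) : IsSolid (closure (range φ)) := by
  have hS : ((φ : E →+ F).range.topologicalClosure : Set F) = closure (range φ) := by
    rw [AddSubgroup.topologicalClosure_coe, AddMonoidHom.coe_range]; rfl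
  rw [← hS]
  refine AddSubgroup.isSolid_of_forall_nonneg_le_abs _ fun v hv w hw hwv => ?_
  rw [← SetLike.mem_coe, hS] at hv ⊢
  exact hφ.mem_closure_range_of_nonneg_of_le_abs hsup hv hw hwv

theorem mem_closure_image_Icc_of_mem_closure_range [AddLeftMono F]
    (hsup : ∀ x y, φ (x ⊔ y) = φ x ⊔ φ y) {x : E} (hx : 0 ≤ x) {u : F}
    (hu : u ∈ closure (range φ)) (hu0 : 0 ≤ u) (hux : u ≤ φ x) :
    u ∈ closure (φ '' Icc 0 x) := by
  have hcont : Continuous fun y : F => (y ⊔ 0) ⊓ φ x :=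
    (continuous_id.sup continuous_const).inf continuous_const
  have hmaps : MapsTo (fun y : F => (y ⊔ 0) ⊓ φ x) (range φ) (φ '' Icc 0 x) := by
    rintro _ ⟨z, rfl⟩
    refine ⟨(z ⊔ 0) ⊓ x, ⟨le_inf le_sup_right hx, inf_le_right⟩, ?_⟩
    rw [map_inf_of_map_sup hsup, hsup, map_zero]
  simpa [sup_eq_left.mpr hu0, inf_eq_left.mpr hux] using map_mem_closure hcont hu hmaps

theorem isAlmostIntervalPreserving_of_isSolid_closure_range [AddLeftMono F]
    [OrderClosedTopology F] (hsup : ∀ x y, φ (x ⊔ y) = φ x ⊔ φ y)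
    (hS : IsSolid (closure (range φ))) : IsAlmostIntervalPreserving φ := by
  have hmono : Monotone φ := OrderHomClass.mono (SupHom.mk φ hsup)
  have hpos : ∀ x, 0 ≤ x → 0 ≤ φ x := fun x hx => map_zero φ ▸ hmono hx
  refine ⟨hpos, fun x hx => Subset.antisymm (fun u ⟨hu0, hux⟩ => ?_) ?_⟩
  · refine mem_closure_image_Icc_of_mem_closure_range hsup hx ?_ hu0 hux
    refine hS (subset_closure (mem_range_self x)) ?_
    rwa [abs_of_nonneg hu0, abs_of_nonneg (hpos x hx)]
  · refine closure_minimal (hmono.image_Icc_subset.trans ?_) isClosed_Icc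
    rw [map_zero]

end Topological

theorem latticeHom_almostIntervalPreserving_iff_closure_range_ideal_general
    {E F : Type*}
    [AddCommGroup E] [Lattice E] [CovariantClass E E (· + ·) (· ≤ ·)]
    [Module ℝ E]
    [NormedAddCommGroup F] [Lattice F] [HasSolidNorm F] [IsOrderedAddMonoid F]
    [NormedSpace ℝ F]
    (φ : E →ₗ[ℝ] F)
    (hom : ∀ x y : E, φ (x ⊔ y) = φ x ⊔ φ y) :
    ((∀ x : E, 0 ≤ x → 0 ≤ φ x) ∧
        ∀ x : E, 0 ≤ x → Icc (0 : F) (φ x) = closure (φ '' Icc 0 x)) ↔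
      (∀ u v : F, v ∈ closure (Set.range φ) → |u| ≤ |v| → u ∈ closure (Set.range φ)) :=
  ⟨fun h u v hv huv => IsAlmostIntervalPreserving.isSolid_closure_range h hom hv huv,
    fun h => isAlmostIntervalPreserving_of_isSolid_closure_range hom fun v hv u huv => h u v hv huv⟩

/-- A lattice homomorphism `φ : E → F` from a vector lattice into a normed
lattice is almost interval preserving if and only if the norm closure of its range is an
ideal in `F`. -/
theorem latticeHom_almostIntervalPreserving_iff_closure_range_ideal
    {E F : Type*}
    [AddCommGroup E] [Lattice E] [CovariantClass E E (· + ·) (· ≤ ·)]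
    [Module ℝ E] [PosSMulMono ℝ E]
    [NormedAddCommGroup F] [Lattice F] [HasSolidNorm F] [IsOrderedAddMonoid F]
    [NormedSpace ℝ F]
    (φ : E →ₗ[ℝ] F)
    (hom : ∀ x y : E, φ (x ⊔ y) = φ x ⊔ φ y) :
    ((∀ x : E, 0 ≤ x → 0 ≤ φ x) ∧
        ∀ x : E, 0 ≤ x → Icc (0 : F) (φ x) = closure (φ '' Icc 0 x)) ↔
      (∀ u v : F, v ∈ closure (Set.range φ) → |u| ≤ |v| → u ∈ closure (Set.range φ)) :=
  latticeHom_almostIntervalPreserving_iff_closure_range_ideal_general φ hom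
end

section
/- Let E and E′ be vector lattices and let F and F′ be normed lattices. Suppose given maps ψ: E → F, φ_E: E → E′, φ_F: F → F′ and ψ′: E′ → F′ satisfying ψ′ ∘ φ_E = φ_F ∘ ψ, where φ_E is a positive linear map with φ_E(E⁺) = (E′)⁺, and φ_F is a continuous surjective lattice homomorphism. If ψ is an almost interval preserving linear map, then ψ′ is an almost interval preserving linear map. -/
/-!
Since `φ_E` maps the positive cone onto the positive cone it is surjective, so `ψ'` is the linear
map induced by `φ_F ∘ ψ`, and it is positive. Being a surjective lattice homomorphism, `φ_F` maps
`[0, u]` onto `[0, φ_F u]` (clamp a preimage into the interval). Hence for `a = φ_E x` with `x ≥ 0`,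
`[0, ψ' a] = φ_F [0, ψ x] = φ_F (closure ψ[0, x]) ⊆ closure (φ_F ψ [0, x]) = closure (ψ' φ_E [0, x])
⊆ closure ψ'[0, a]`, and the reverse inclusion holds because `ψ'` is positive and `[0, ψ' a]` is closed.
-/

open Set

theorem monotone_of_map_nonneg {G α β : Type*} [AddGroup α] [Preorder α] [AddRightMono α]
    [AddGroup β] [Preorder β] [AddRightMono β] [FunLike G α β] [AddMonoidHomClass G α β] {f : G}
    (hf : ∀ a, 0 ≤ a → 0 ≤ f a) : Monotone f :=
  fun a b hab => sub_nonneg.1 <| map_sub f b a ▸ hf _ (sub_nonneg.2 hab)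

section LatticeOrderedGroup

variable {G α β : Type*} [AddCommGroup α] [Lattice α] [AddLeftMono α]
  [AddCommGroup β] [Lattice β] [AddLeftMono β] [FunLike G α β] [AddMonoidHomClass G α β]

theorem map_inf_of_map_sup_s10 {f : G} (hf : ∀ a b, f (a ⊔ b) = f a ⊔ f b) (a b : α) :
    f (a ⊓ b) = f a ⊓ f b := by
  rw [eq_sub_of_add_eq (inf_add_sup a b), eq_sub_of_add_eq (inf_add_sup (f a) (f b)), map_sub,
    map_add, hf]

theorem image_Icc_eq_of_map_sup {f : G} (hf : ∀ a b, f (a ⊔ b) = f a ⊔ f b)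
    (hsurj : Function.Surjective f) {a b : α} (hab : a ≤ b) :
    f '' Icc a b = Icc (f a) (f b) := by
  refine (Monotone.of_map_sup hf).image_Icc_subset.antisymm ?_
  rintro w ⟨haw, hwb⟩
  obtain ⟨v, rfl⟩ := hsurj w
  refine ⟨(v ⊔ a) ⊓ b, ⟨le_inf le_sup_right hab, inf_le_right⟩, ?_⟩
  rw [map_inf_of_map_sup_s10 hf, hf, sup_of_le_left haw, inf_of_le_left hwb]

theorem surjective_of_image_nonneg_eq {E : Type*} [AddGroup E] [LE E] [FunLike G E β]
    [AddMonoidHomClass G E β] {f : G} (hf : f '' {x | 0 ≤ x} = {y | 0 ≤ y}) :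
    Function.Surjective f := by
  intro y
  obtain ⟨x₁, -, hx₁⟩ : y⁺ ∈ f '' {x | 0 ≤ x} := hf ▸ posPart_nonneg y
  obtain ⟨x₂, -, hx₂⟩ : y⁻ ∈ f '' {x | 0 ≤ x} := hf ▸ negPart_nonneg y
  exact ⟨x₁ - x₂, by rw [map_sub, hx₁, hx₂, posPart_sub_negPart]⟩

end LatticeOrderedGroup

theorem LinearMap.exists_coe_eq_of_comp_surjective {R M N P : Type*} [Semiring R]
    [AddCommMonoid M] [AddCommMonoid N] [AddCommMonoid P] [Module R M] [Module R N] [Module R P]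
    {φ : M →ₗ[R] N} (hφ : Function.Surjective φ) (g : M →ₗ[R] P) {h : N → P}
    (hcomm : ∀ x, h (φ x) = g x) : ∃ L : N →ₗ[R] P, ⇑L = h := by
  refine ⟨{ toFun := h, map_add' := ?_, map_smul' := ?_ }, rfl⟩
  · intro a b
    obtain ⟨x, rfl⟩ := hφ a
    obtain ⟨y, rfl⟩ := hφ b
    simp only [← map_add, hcomm]
  · intro c a
    obtain ⟨x, rfl⟩ := hφ a
    simp only [← map_smul, hcomm, RingHom.id_apply]

theorem pushing_down_almostIntervalPreserving_general
    {E E' F F' : Type*}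
    [AddCommGroup E] [Lattice E] [CovariantClass E E (· + ·) (· ≤ ·)]
    [Module ℝ E]
    [AddCommGroup E'] [Lattice E'] [CovariantClass E' E' (· + ·) (· ≤ ·)]
    [Module ℝ E']
    [NormedAddCommGroup F] [Lattice F] [IsOrderedAddMonoid F] [NormedSpace ℝ F]
    [NormedAddCommGroup F'] [Lattice F'] [IsOrderedAddMonoid F'] [HasSolidNorm F'] [NormedSpace ℝ F']
    (ψ : E →ₗ[ℝ] F) (φE : E →ₗ[ℝ] E') (φF : F →L[ℝ] F') (ψ' : E' → F')
    (hcomm : ∀ x : E, ψ' (φE x) = φF (ψ x))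
    (hφE_cone : φE '' {x : E | 0 ≤ x} = {y : E' | 0 ≤ y})
    (hφF_hom : ∀ x y : F, φF (x ⊔ y) = φF x ⊔ φF y)
    (hφF_surj : Function.Surjective φF)
    (hψ_aip : ∀ x : E, 0 ≤ x → Icc (0 : F) (ψ x) = closure (ψ '' Icc 0 x)) :
    (∀ a b : E', ψ' (a + b) = ψ' a + ψ' b) ∧
    (∀ (c : ℝ) (a : E'), ψ' (c • a) = c • ψ' a) ∧
    (∀ a : E', 0 ≤ a → 0 ≤ ψ' a) ∧
    (∀ a : E', 0 ≤ a → Icc (0 : F') (ψ' a) = closure (ψ' '' Icc 0 a)) := by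
  have hψ_nonneg (x : E) (hx : 0 ≤ x) : 0 ≤ ψ x :=
    ((hψ_aip x hx).symm ▸ subset_closure (mem_image_of_mem ψ ⟨hx, le_rfl⟩) : ψ x ∈ Icc 0 (ψ x)).1
  have hφE_mono : Monotone φE :=
    monotone_of_map_nonneg fun x hx =>
      show φE x ∈ {y : E' | 0 ≤ y} from hφE_cone ▸ mem_image_of_mem φE hx
  obtain ⟨L, rfl⟩ := LinearMap.exists_coe_eq_of_comp_surjective
    (surjective_of_image_nonneg_eq hφE_cone) (φF.toLinearMap ∘ₗ ψ) hcomm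
  have hL_nonneg (a : E') (ha : 0 ≤ a) : 0 ≤ L a := by
    obtain ⟨x, hx, rfl⟩ : a ∈ φE '' {x | 0 ≤ x} := hφE_cone ▸ ha
    rw [hcomm, ← map_zero φF]
    exact Monotone.of_map_sup hφF_hom (hψ_nonneg x hx)
  refine ⟨map_add L, map_smul L, hL_nonneg, fun a ha => ?_⟩
  obtain ⟨x, hx, rfl⟩ : a ∈ φE '' {x | 0 ≤ x} := hφE_cone ▸ ha
  refine Subset.antisymm ?_ <| closure_minimal
    (map_zero L ▸ (monotone_of_map_nonneg hL_nonneg).image_Icc_subset) isClosed_Icc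
  calc Icc 0 (L (φE x))
      = φF '' Icc 0 (ψ x) := by
        rw [hcomm, image_Icc_eq_of_map_sup hφF_hom hφF_surj (hψ_nonneg x hx), map_zero]
    _ = φF '' closure (ψ '' Icc 0 x) := by rw [hψ_aip x hx]
    _ ⊆ closure (φF '' (ψ '' Icc 0 x)) := image_closure_subset_closure_image φF.continuous
    _ = closure (L '' (φE '' Icc 0 x)) := by simp only [image_image, hcomm]
    _ ⊆ closure (L '' Icc 0 (φE x)) :=
        closure_mono (image_mono (map_zero φE ▸ hφE_mono.image_Icc_subset))

/-- Pushing the almost interval preserving property down a commutative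
square: if `ψ' ∘ φ_E = φ_F ∘ ψ` with `φ_E` positive linear and `φ_E(E⁺) = (E')⁺`, `φ_F` a
continuous surjective lattice homomorphism, and `ψ` an almost interval preserving linear
map, then `ψ'` is an almost interval preserving linear map. -/
theorem pushing_down_almostIntervalPreserving
    {E E' F F' : Type*}
    [AddCommGroup E] [Lattice E] [CovariantClass E E (· + ·) (· ≤ ·)]
    [Module ℝ E] [PosSMulMono ℝ E]
    [AddCommGroup E'] [Lattice E'] [CovariantClass E' E' (· + ·) (· ≤ ·)]
    [Module ℝ E'] [PosSMulMono ℝ E']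
    [NormedAddCommGroup F] [Lattice F] [IsOrderedAddMonoid F] [HasSolidNorm F] [NormedSpace ℝ F]
    [NormedAddCommGroup F'] [Lattice F'] [IsOrderedAddMonoid F'] [HasSolidNorm F'] [NormedSpace ℝ F']
    (ψ : E →ₗ[ℝ] F) (φE : E →ₗ[ℝ] E') (φF : F →L[ℝ] F') (ψ' : E' → F')
    (hcomm : ∀ x : E, ψ' (φE x) = φF (ψ x))
    (hφE_pos : ∀ x : E, 0 ≤ x → 0 ≤ φE x)
    (hφE_cone : φE '' {x : E | 0 ≤ x} = {y : E' | 0 ≤ y})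
    (hφF_hom : ∀ x y : F, φF (x ⊔ y) = φF x ⊔ φF y)
    (hφF_surj : Function.Surjective φF)
    (hψ_pos : ∀ x : E, 0 ≤ x → 0 ≤ ψ x)
    (hψ_aip : ∀ x : E, 0 ≤ x → Icc (0 : F) (ψ x) = closure (ψ '' Icc 0 x)) :
    (∀ a b : E', ψ' (a + b) = ψ' a + ψ' b) ∧
    (∀ (c : ℝ) (a : E'), ψ' (c • a) = c • ψ' a) ∧
    (∀ a : E', 0 ≤ a → 0 ≤ ψ' a) ∧
    (∀ a : E', 0 ≤ a → Icc (0 : F') (ψ' a) = closure (ψ' '' Icc 0 a)) :=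
  pushing_down_almostIntervalPreserving_general ψ φE φF ψ' hcomm hφE_cone hφF_hom hφF_surj hψ_aip
end

section
/- Let E be a normed lattice and I a directed nonempty set. Suppose that for each i ∈ I, E_i is a vector sublattice of E, that E_i ⊆ E_j whenever i ≤ j, and that E is the norm closure of ⋃_i E_i. Then the following are equivalent: (1) for all i ≤ j the inclusion map E_i → E_j is almost interval preserving, i.e. for every x ∈ E_i⁺, {y ∈ E_j : 0 ≤ y ≤ x} is contained in the closure of {y ∈ E_i : 0 ≤ y ≤ x}; (2) for every i, the inclusion map E_i → ⋃_j E_j is almost interval preserving; (3) for every i, the inclusion map E_i → E is almost interval preserving, i.e. for every x ∈ E_i⁺, {y ∈ E : 0 ≤ y ≤ x} is contained in the closure of {y ∈ E_i : 0 ≤ y ≤ x}. -/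
open Set

/-! Every `y ∈ [0, x]` is the limit of truncations `(z ⊔ 0) ⊓ x` of elements `z` of the dense
union, by continuity of the lattice operations; such a truncation lies in `[0, x]` inside some
`E_k` with `k ≥ i`, so (1) puts it in the closure of `E_i ∩ [0, x]`, which gives (3). The
implications (3) → (2) → (1) are restrictions of the sets involved. -/

theorem Icc_subset_closure_image_truncate {E : Type*} [TopologicalSpace E] [Lattice E]
    [TopologicalLattice E] {D : Set E} (hD : Dense D) (a b : E) :
    Icc a b ⊆ closure ((fun z => (z ⊔ a) ⊓ b) '' D) := by
  intro y hy
  have hfix : (y ⊔ a) ⊓ b = y := by rw [sup_eq_left.2 hy.1, inf_eq_left.2 hy.2]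
  have hcont : Continuous fun z : E => (z ⊔ a) ⊓ b := by fun_prop
  rw [← hfix]
  exact image_closure_subset_closure_image hcont ⟨y, hD y, rfl⟩

theorem AddSubgroup.infClosed_of_supClosed {E : Type*} [AddGroup E] [Lattice E]
    [AddLeftMono E] [AddRightMono E] (G : AddSubgroup E) (hG : SupClosed (G : Set E)) :
    InfClosed (G : Set E) := by
  intro a ha b hb
  simpa only [SetLike.mem_coe, neg_sup, neg_neg] using G.neg_mem (hG (G.neg_mem ha) (G.neg_mem hb))

theorem nested_sublattices_almostIntervalPreserving_tfae_general
    {E : Type*} [NormedAddCommGroup E] [Lattice E] [HasSolidNorm E] [IsOrderedAddMonoid E]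
    [NormedSpace ℝ E]
    {ι : Type*} [Preorder ι] [IsDirected ι (· ≤ ·)]
    (S : ι → Submodule ℝ E)
    (hlat : ∀ i, ∀ x y : E, x ∈ S i → y ∈ S i → x ⊔ y ∈ S i)
    (hmono : ∀ i j, i ≤ j → S i ≤ S j)
    (hdense : closure (⋃ i, (S i : Set E)) = univ) :
    List.TFAE
      [∀ i j, i ≤ j → ∀ x ∈ S i, 0 ≤ x →
          {y : E | y ∈ S j ∧ y ∈ Icc 0 x} ⊆ closure {y : E | y ∈ S i ∧ y ∈ Icc 0 x},
       ∀ i, ∀ x ∈ S i, 0 ≤ x →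
          {y : E | (∃ j, y ∈ S j) ∧ y ∈ Icc 0 x} ⊆ closure {y : E | y ∈ S i ∧ y ∈ Icc 0 x},
       ∀ i, ∀ x ∈ S i, 0 ≤ x →
          Icc (0 : E) x ⊆ closure {y : E | y ∈ S i ∧ y ∈ Icc 0 x}] := by
  tfae_have 1 → 3 := by
    intro h1 i x hx hx0
    refine (Icc_subset_closure_image_truncate (dense_iff_closure_eq.2 hdense) 0 x).trans
      (closure_minimal ?_ isClosed_closure)
    rintro _ ⟨z, hz, rfl⟩
    obtain ⟨j, hzj⟩ := mem_iUnion.1 hz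
    obtain ⟨k, hik, hjk⟩ := directed_of (· ≤ ·) i j
    have hsup : SupClosed (S k : Set E) := fun a ha b hb => hlat k a b ha hb
    have hinf := (S k).toAddSubgroup.infClosed_of_supClosed hsup
    exact h1 i k hik x hx hx0
      ⟨hinf (hsup (hmono j k hjk hzj) (S k).zero_mem) (hmono i k hik hx),
        le_inf le_sup_right hx0, inf_le_right⟩
  tfae_have 3 → 2 := fun h3 i x hx hx0 _ hy => h3 i x hx hx0 hy.2
  tfae_have 2 → 1 := fun h2 i _ _ x hx hx0 y hy => h2 i x hx hx0 ⟨⟨_, hy.1⟩, hy.2⟩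
  tfae_finish

/-- For a directed nested family of vector sublattices `S i` of a normed
lattice `E` whose union is dense, the following are equivalent: (1) all inclusions
`S i → S j` (`i ≤ j`) are almost interval preserving; (2) all inclusions `S i → ⋃ j, S j`
are almost interval preserving; (3) all inclusions `S i → E` are almost interval
preserving. -/
theorem nested_sublattices_almostIntervalPreserving_tfae
    {E : Type*} [NormedAddCommGroup E] [Lattice E] [HasSolidNorm E] [IsOrderedAddMonoid E]
    [NormedSpace ℝ E]
    {ι : Type*} [Preorder ι] [IsDirected ι (· ≤ ·)] [Nonempty ι]
    (S : ι → Submodule ℝ E)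
    (hlat : ∀ i, ∀ x y : E, x ∈ S i → y ∈ S i → x ⊔ y ∈ S i)
    (hmono : ∀ i j, i ≤ j → S i ≤ S j)
    (hdense : closure (⋃ i, (S i : Set E)) = univ) :
    List.TFAE
      [∀ i j, i ≤ j → ∀ x ∈ S i, 0 ≤ x →
          {y : E | y ∈ S j ∧ y ∈ Icc 0 x} ⊆ closure {y : E | y ∈ S i ∧ y ∈ Icc 0 x},
       ∀ i, ∀ x ∈ S i, 0 ≤ x →
          {y : E | (∃ j, y ∈ S j) ∧ y ∈ Icc 0 x} ⊆ closure {y : E | y ∈ S i ∧ y ∈ Icc 0 x},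
       ∀ i, ∀ x ∈ S i, 0 ≤ x →
          Icc (0 : E) x ⊆ closure {y : E | y ∈ S i ∧ y ∈ Icc 0 x}] :=
  nested_sublattices_almostIntervalPreserving_tfae_general S hlat hmono hdense
end

section
/- Let E be a Banach lattice and let (E_i)_{i∈I} be a family of closed ideals in E such that E equals the norm closure of ⋃_i E_i. Then E has order continuous norm if and only if every E_i (as a Banach lattice with the induced norm and order) has order continuous norm. -/
/-!
Only the converse direction has content. Given an increasing sequence `x ≤ b`, approximate
`b - x 0` within `ε` by some `c` in an ideal `J i`. The truncations `(x n - x 0) ⊓ |c|` increase,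
lie in `J i` and are bounded there by `|c|`, so they converge; and since `y - y ⊓ d = (y - d)⁺`
is monotone in `y`, they stay within `‖b - x 0 - c‖ < ε` of `x n - x 0` for all `n`.
A sequence that is uniformly approximable by Cauchy sequences is Cauchy, and `E` is complete.
-/

open Set Filter

theorem Metric.cauchySeq_of_forall_dist_lt_cauchySeq {α β : Type*} [PseudoMetricSpace α]
    [Nonempty β] [SemilatticeSup β] {x : β → α}
    (h : ∀ ε > 0, ∃ z : β → α, CauchySeq z ∧ ∀ n, dist (x n) (z n) < ε) : CauchySeq x := by
  refine Metric.cauchySeq_iff.2 fun ε hε => ?_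
  obtain ⟨z, hz, hxz⟩ := h (ε / 3) (by positivity)
  obtain ⟨N, hN⟩ := Metric.cauchySeq_iff.1 hz (ε / 3) (by positivity)
  refine ⟨N, fun m hm n hn => ?_⟩
  calc dist (x m) (x n) ≤ dist (x m) (z m) + dist (z m) (z n) + dist (z n) (x n) :=
        dist_triangle4 _ _ _ _
    _ < ε / 3 + ε / 3 + ε / 3 := by
        gcongr
        · exact hxz m
        · exact hN m hm n hn
        · exact dist_comm (x n) (z n) ▸ hxz n
    _ = ε := by ring

section SolidNorm

variable {E : Type*} [NormedAddCommGroup E] [Lattice E] [HasSolidNorm E] [IsOrderedAddMonoid E]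

theorem norm_sub_inf_le_of_le {y a : E} (hya : y ≤ a) (d : E) : ‖y - y ⊓ d‖ ≤ ‖a - d‖ := by
  refine norm_le_norm_of_abs_le_abs ?_
  have hsub : y - y ⊓ d = (y - d) ⊔ 0 := by rw [sub_inf, sub_self, sup_comm]
  calc |y - y ⊓ d| = (y - d) ⊔ 0 := by rw [hsub, abs_of_nonneg le_sup_right]
    _ ≤ (a - d) ⊔ 0 := sup_le_sup_right (sub_le_sub_right hya d) 0
    _ ≤ |a - d| := sup_le (le_abs_self _) (abs_nonneg _)

theorem norm_sub_abs_le_of_nonneg {a : E} (ha : 0 ≤ a) (c : E) : ‖a - |c|‖ ≤ ‖a - c‖ := by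
  simpa only [abs_of_nonneg ha] using norm_abs_sub_abs a c

end SolidNorm

theorem orderContinuous_iff_closed_ideals_orderContinuous_general
    {E : Type*} [NormedAddCommGroup E] [Lattice E] [HasSolidNorm E]
    [IsOrderedAddMonoid E] [NormedSpace ℝ E] [CompleteSpace E]
    {ι : Type*} (J : ι → Submodule ℝ E)
    (hideal : ∀ i, ∀ x y : E, y ∈ J i → |x| ≤ |y| → x ∈ J i)
    (hdense : closure (⋃ i, (J i : Set E)) = univ) :
    (∀ (x : ℕ → E) (b : E), Monotone x → (∀ n, x n ≤ b) →
        ∃ l : E, Tendsto x atTop (nhds l)) ↔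
      ∀ i, ∀ (x : ℕ → E) (b : E), (∀ n, x n ∈ J i) → b ∈ J i → Monotone x →
        (∀ n, x n ≤ b) → ∃ l : E, Tendsto x atTop (nhds l) := by
  refine ⟨fun h i x b _ _ => h x b, fun h x b hmono hbd => ?_⟩
  set y : ℕ → E := fun n => x n - x 0
  have hy_nonneg n : 0 ≤ y n := sub_nonneg.2 (hmono n.zero_le)
  suffices hy : CauchySeq y by
    simpa [y] using cauchySeq_tendsto_of_complete (hy.add_const (x := x 0))
  refine Metric.cauchySeq_of_forall_dist_lt_cauchySeq fun ε hε => ?_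
  obtain ⟨c, ⟨_, ⟨i, rfl⟩, hc⟩, hcε⟩ :=
    Metric.mem_closure_iff.1 (hdense ▸ mem_univ (b - x 0)) ε hε
  have hz_mem n : y n ⊓ |c| ∈ J i := hideal i _ c hc <| by
    rw [abs_of_nonneg (le_inf (hy_nonneg n) (abs_nonneg c))]
    exact inf_le_right
  obtain ⟨l, hl⟩ := h i (fun n => y n ⊓ |c|) |c| hz_mem (hideal i _ c hc (abs_abs c).le)
    (fun m n hmn => inf_le_inf_right _ (sub_le_sub_right (hmono hmn) _)) fun n => inf_le_right
  refine ⟨_, hl.cauchySeq, fun n => ?_⟩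
  calc dist (y n) (y n ⊓ |c|) = ‖y n - y n ⊓ |c|‖ := dist_eq_norm _ _
    _ ≤ ‖(b - x 0) - |c|‖ := norm_sub_inf_le_of_le (sub_le_sub_right (hbd n) _) _
    _ ≤ ‖(b - x 0) - c‖ := norm_sub_abs_le_of_nonneg (sub_nonneg.2 (hbd 0)) c
    _ < ε := by rwa [← dist_eq_norm]

/-- Let `E` be a Banach lattice and `(J i)` a family of closed ideals of
`E` whose union is norm dense. Then `E` has order continuous norm iff every `J i` (with the
induced norm and order) has order continuous norm. -/
theorem orderContinuous_iff_closed_ideals_orderContinuous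
    {E : Type*} [NormedAddCommGroup E] [Lattice E] [HasSolidNorm E]
    [IsOrderedAddMonoid E] [NormedSpace ℝ E] [CompleteSpace E]
    {ι : Type*} (J : ι → Submodule ℝ E)
    (hclosed : ∀ i, IsClosed (J i : Set E))
    (hideal : ∀ i, ∀ x y : E, y ∈ J i → |x| ≤ |y| → x ∈ J i)
    (hdense : closure (⋃ i, (J i : Set E)) = univ) :
    (∀ (x : ℕ → E) (b : E), Monotone x → (∀ n, x n ≤ b) →
        ∃ l : E, Tendsto x atTop (nhds l)) ↔
      ∀ i, ∀ (x : ℕ → E) (b : E), (∀ n, x n ∈ J i) → b ∈ J i → Monotone x →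
        (∀ n, x n ≤ b) → ∃ l : E, Tendsto x atTop (nhds l) :=
  orderContinuous_iff_closed_ideals_orderContinuous_general J hideal hdense
end

section
/- Let E be a Banach lattice and let (P_i)_{i∈I} be a family of order projections on E (linear maps P_i: E → E with P_i ∘ P_i = P_i and 0 ≤ P_i x ≤ x for all x ∈ E⁺). Then the following are equivalent: (1) E equals the norm closure of ⋃_i P_i(E); (2) for every x ∈ E and every ε > 0 there exists an index i with ‖x − P_i x‖ < ε. Moreover, when these equivalent conditions hold, E has order continuous norm if and only if every range P_i(E) (a closed sublattice of E, hence a Banach lattice) has order continuous norm. -/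
/-!
Order projections are positive contractions, and so are their complements `id - P`. A contractive
idempotent moves `x` by at most twice its distance to its range, which gives the density
equivalence. For order continuity, let `x` be increasing and bounded by `b`. Positivity of
`id - P` gives `‖(xₙ - P xₙ) - (x₀ - P x₀)‖ ≤ ‖(b - x₀) - P (b - x₀)‖`, which is small for a
suitable `P = Pᵢ`; so `x` is uniformly close to a translate of the increasing, order bounded
sequence `Pᵢ xₙ` in the range of `Pᵢ`, which converges. Hence `x` is Cauchy.
-/

open Set Filter Topology

section Order

variable {E F : Type*} [AddCommGroup E] [Lattice E] [IsOrderedAddMonoid E]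
  [FunLike F E E] [AddMonoidHomClass F E E]

theorem abs_map_le_abs_of_nonneg_of_le {P : F} (hP : ∀ x, 0 ≤ x → 0 ≤ P x ∧ P x ≤ x) (x : E) :
    |P x| ≤ |x| := by
  have hmono : Monotone P := (monotone_iff_map_nonneg P).2 fun a ha => (hP a ha).1
  calc |P x| ≤ P |x| := abs_le'.2 ⟨hmono (le_abs_self x), by simpa using hmono (neg_le_abs x)⟩
    _ ≤ |x| := (hP |x| (abs_nonneg x)).2

theorem monotone_sub_map_of_map_le {P : F} (hP : ∀ x, 0 ≤ x → P x ≤ x) :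
    Monotone fun x : E => x - P x := by
  intro u v huv
  have h := hP (v - u) (sub_nonneg.2 huv)
  rw [map_sub, sub_le_sub_iff] at h
  rw [sub_le_sub_iff, add_comm u]
  exact h

end Order

theorem norm_sub_le_norm_sub_of_le_of_le {E : Type*} [NormedAddCommGroup E] [Lattice E]
    [IsOrderedAddMonoid E] [HasSolidNorm E] {a y b : E} (hay : a ≤ y) (hyb : y ≤ b) :
    ‖y - a‖ ≤ ‖b - a‖ := by
  refine norm_le_norm_of_abs_le_abs ?_
  rw [abs_of_nonneg (sub_nonneg.2 hay), abs_of_nonneg (sub_nonneg.2 (hay.trans hyb))]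
  exact sub_le_sub_right hyb a

theorem Metric.cauchySeq_of_forall_dist_le {α : Type*} [PseudoMetricSpace α] {u : ℕ → α}
    (h : ∀ ε > 0, ∃ v : ℕ → α, CauchySeq v ∧ ∀ n, dist (u n) (v n) ≤ ε) : CauchySeq u := by
  refine Metric.cauchySeq_iff'.2 fun ε hε => ?_
  obtain ⟨v, hv, huv⟩ := h (ε / 4) (by positivity)
  obtain ⟨N, hN⟩ := Metric.cauchySeq_iff'.1 hv (ε / 4) (by positivity)
  refine ⟨N, fun n hn => ?_⟩
  have hvN := huv N
  rw [dist_comm] at hvN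
  linarith [dist_triangle4 (u n) (v n) (v N) (u N), huv n, hN n hn]

section Normed

variable {E F : Type*} [SeminormedAddCommGroup E] [FunLike F E E] [AddMonoidHomClass F E E]

theorem norm_sub_map_le_two_mul_norm_sub {P : F} (hP : ∀ v, ‖P v‖ ≤ ‖v‖) (x : E) {y : E}
    (hy : P y = y) : ‖x - P x‖ ≤ 2 * ‖x - y‖ :=
  calc ‖x - P x‖ = ‖(x - y) + P (y - x)‖ := by rw [map_sub, hy]; abel_nf
    _ ≤ ‖x - y‖ + ‖y - x‖ := (norm_add_le _ _).trans (by gcongr; exact hP _)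
    _ = 2 * ‖x - y‖ := by rw [norm_sub_rev y x]; ring

theorem closure_iUnion_range_eq_univ_iff {ι : Type*} (P : ι → F)
    (hidem : ∀ i x, P i (P i x) = P i x) (hP : ∀ i v, ‖P i v‖ ≤ ‖v‖) :
    closure (⋃ i, range (P i)) = univ ↔ ∀ x : E, ∀ ε : ℝ, 0 < ε → ∃ i, ‖x - P i x‖ < ε := by
  constructor
  · intro hdense x ε hε
    obtain ⟨y, hy, hxy⟩ := Metric.mem_closure_iff.1 (hdense ▸ mem_univ x) (ε / 2) (by positivity)
    obtain ⟨i, z, rfl⟩ := mem_iUnion.1 hy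
    refine ⟨i, (norm_sub_map_le_two_mul_norm_sub (hP i) x (hidem i z)).trans_lt ?_⟩
    rw [← dist_eq_norm]
    linarith
  · intro happrox
    refine eq_univ_of_forall fun x => Metric.mem_closure_iff.2 fun ε hε => ?_
    obtain ⟨i, hi⟩ := happrox x ε hε
    exact ⟨P i x, mem_iUnion.2 ⟨i, mem_range_self x⟩, by rwa [dist_eq_norm]⟩

end Normed

theorem Monotone.cauchySeq_of_forall_map_tendsto {ι E F : Type*} [NormedAddCommGroup E]
    [Lattice E] [IsOrderedAddMonoid E] [HasSolidNorm E] [FunLike F E E]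
    [AddMonoidHomClass F E E] {P : ι → F} (hP : ∀ i x, 0 ≤ x → P i x ≤ x)
    (happrox : ∀ x : E, ∀ ε : ℝ, 0 < ε → ∃ i, ‖x - P i x‖ < ε) {x : ℕ → E} {b : E}
    (hx : Monotone x) (hb : ∀ n, x n ≤ b)
    (hconv : ∀ i, ∃ l, Tendsto (fun n => P i (x n)) atTop (𝓝 l)) : CauchySeq x := by
  refine Metric.cauchySeq_of_forall_dist_le fun ε hε => ?_
  obtain ⟨i, hi⟩ := happrox (b - x 0) ε hε
  obtain ⟨l, hl⟩ := hconv i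
  refine ⟨fun n => P i (x n) + (x 0 - P i (x 0)), (hl.add_const _).cauchySeq, fun n => ?_⟩
  have hcompl := monotone_sub_map_of_map_le (hP i)
  calc dist (x n) (P i (x n) + (x 0 - P i (x 0)))
        = ‖(x n - P i (x n)) - (x 0 - P i (x 0))‖ := by rw [dist_eq_norm]; abel_nf
    _ ≤ ‖(b - P i b) - (x 0 - P i (x 0))‖ :=
        norm_sub_le_norm_sub_of_le_of_le (hcompl (hx n.zero_le)) (hcompl (hb n))
    _ = ‖(b - x 0) - P i (b - x 0)‖ := by rw [map_sub]; abel_nf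
    _ ≤ ε := hi.le

/-- Let `(P i)` be a family of order projections on a Banach lattice `E`.
Then the union of the ranges is norm dense iff for every `x` and `ε > 0` there is an `i`
with `‖x - P i x‖ < ε`; and in that case `E` has order continuous norm iff every range
`P i (E)` has order continuous norm. -/
theorem bandProjections_density_and_orderContinuity
    {E : Type*} [NormedAddCommGroup E] [Lattice E] [HasSolidNorm E]
      [IsOrderedAddMonoid E] [NormedSpace ℝ E] [CompleteSpace E]
    {ι : Type*} (P : ι → E →ₗ[ℝ] E)
    (hidem : ∀ i, (P i) ∘ₗ (P i) = P i)
    (hord : ∀ i, ∀ x : E, 0 ≤ x → 0 ≤ P i x ∧ P i x ≤ x) :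
    ((closure (⋃ i, Set.range (P i)) = univ) ↔
      ∀ x : E, ∀ ε : ℝ, 0 < ε → ∃ i, ‖x - P i x‖ < ε) ∧
    (closure (⋃ i, Set.range (P i)) = univ →
      ((∀ (x : ℕ → E) (b : E), Monotone x → (∀ n, x n ≤ b) →
          ∃ l : E, Tendsto x atTop (nhds l)) ↔
        ∀ i, ∀ (x : ℕ → E) (b : E), (∀ n, x n ∈ LinearMap.range (P i)) →
          b ∈ LinearMap.range (P i) → Monotone x → (∀ n, x n ≤ b) →
          ∃ l : E, Tendsto x atTop (nhds l))) := by
  have hfix : ∀ i x, P i (P i x) = P i x := fun i => LinearMap.congr_fun (hidem i)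
  have hcontr : ∀ i v, ‖P i v‖ ≤ ‖v‖ := fun i v =>
    norm_le_norm_of_abs_le_abs (abs_map_le_abs_of_nonneg_of_le (hord i) v)
  have hmono : ∀ i, Monotone (P i) := fun i =>
    (monotone_iff_map_nonneg (P i)).2 fun a ha => (hord i a ha).1
  have hdense := closure_iUnion_range_eq_univ_iff P hfix hcontr
  refine ⟨hdense, fun hcl => ⟨fun h i x b _ _ => h x b, fun h x b hx hb => ?_⟩⟩
  refine cauchySeq_tendsto_of_complete <|
    hx.cauchySeq_of_forall_map_tendsto (fun i y hy => (hord i y hy).2) (hdense.1 hcl) hb fun i => ?_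
  exact h i _ (P i b) (fun n => ⟨x n, rfl⟩) ⟨b, rfl⟩ ((hmono i).comp hx) fun n => hmono i (hb n)
end

section
/- Let X be a (not necessarily Hausdorff) topological space such that every compact subset of X is metrizable in the subspace topology. Let Ω be a σ-algebra of subsets of X such that every continuous compactly supported function f: X → ℝ is Ω-measurable, and let μ be a measure on Ω. Let L⁰(X,Ω,μ) be the vector lattice of μ-almost-everywhere equivalence classes of Ω-measurable real functions on X, and let j: C_c(X) → L⁰(X,Ω,μ) be the map sending f to its equivalence class [f]. Let E be a Banach function space over (X,Ω,μ), i.e. an order ideal of L⁰(X,Ω,μ) equipped with a norm under which it is a Banach lattice (with the order induced from L⁰), and suppose that j(C_c(X)) ⊆ E and that j(C_c(X)) is norm dense in E. Then E has order continuous norm. -/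
open Set Filter MeasureTheory

/-!
If the norm is not order continuous, a bounded increasing sequence has infinitely many increments
of norm at least `ε`. Since `E` is an ideal of `L⁰`, the sums of these increments over arbitrary
sets of indices exist in `E`; summing over `{k | qₖ < r}` for an enumeration `(qₖ)` of `ℚ` gives an
uncountable `ε`-separated family `(s r)` in an order interval `[0, c]`.

On the other hand, approximating `c` by a continuous compactly supported `f ≥ 0` and each `s r` by
a continuous `χᵣ` with `0 ≤ χᵣ ≤ f`, the restrictions of the `χᵣ` to the compact metrizable set
`tsupport f` lie in the separable space `C(tsupport f, ℝ)`, so two of them are uniformly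
`δ`-close. Then `|χᵣ - χᵣ'| ≤ min f δ ≤ √δ √f`, and `√f` is again in `C_c(X)`, so the
corresponding elements of `E` are `√δ ‖[√f]‖`-close, which contradicts the separation.
-/

lemma exists_ne_dist_lt_of_uncountable {α ι : Type*} [PseudoMetricSpace α]
    [TopologicalSpace.SeparableSpace α] [Uncountable ι] (F : ι → α) {δ : ℝ} (hδ : 0 < δ) :
    ∃ i j, i ≠ j ∧ dist (F i) (F j) < δ := by
  by_contra! h
  have hdisj : (univ : Set ι).PairwiseDisjoint fun i => Metric.ball (F i) (δ / 2) := by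
    intro i _ j _ hij
    refine Set.disjoint_left.2 fun z hzi hzj => ?_
    rw [Metric.mem_ball, dist_comm] at hzi
    rw [Metric.mem_ball] at hzj
    linarith [h i j hij, dist_triangle (F i) z (F j)]
  exact not_countable_univ (hdisj.countable_of_isOpen (fun _ _ => Metric.isOpen_ball)
    fun _ _ => Metric.nonempty_ball.2 (half_pos hδ))

lemma exists_monotone_norm_sub_ge_of_not_cauchySeq {E : Type*} [SeminormedAddCommGroup E]
    {x : ℕ → E} (hx : ¬ CauchySeq x) :
    ∃ ε > 0, ∃ n : ℕ → ℕ, Monotone n ∧ ∀ k, ε ≤ ‖x (n (k + 1)) - x (n k)‖ := by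
  simp only [Metric.cauchySeq_iff', not_forall, not_exists, not_lt] at hx
  obtain ⟨ε, hε, h⟩ := hx
  choose m hm hdist using h
  refine ⟨ε, hε, fun k => m^[k] 0, monotone_nat_of_le_succ fun k => ?_, fun k => ?_⟩
  · simp only [Function.iterate_succ_apply']
    exact hm _
  · simp only [Function.iterate_succ_apply', ← dist_eq_norm]
    exact hdist _

lemma tsum_indicator_mem_Icc {a : ℕ → ℝ} (ha : ∀ k, 0 ≤ a k) (hs : Summable a) (A : Set ℕ) :
    ∑' k, A.indicator a k ∈ Icc 0 (∑' k, a k) :=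
  ⟨tsum_nonneg fun k => indicator_nonneg (fun k _ => ha k) k,
    (hs.indicator A).tsum_le_tsum (fun k => indicator_le_self' (fun k _ => ha k) k) hs⟩

lemma tsum_indicator_add_le {a : ℕ → ℝ} (ha : ∀ k, 0 ≤ a k) (hs : Summable a) {A B : Set ℕ}
    (hAB : A ⊆ B) {k : ℕ} (hk : k ∈ B \ A) :
    ∑' i, A.indicator a i + a k ≤ ∑' i, B.indicator a i := by
  have hsplit : ∀ i, B.indicator a i = A.indicator a i + (B \ A).indicator a i := by
    intro i
    simpa [union_sdiff_cancel hAB] using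
      congrFun (indicator_union_of_disjoint (disjoint_sdiff_right : Disjoint A (B \ A)) a) i
  have hk' : a k ≤ ∑' i, (B \ A).indicator a i := by
    simpa [indicator_of_mem hk] using
      (hs.indicator (B \ A)).le_tsum k fun j _ => indicator_nonneg (fun j _ => ha j) j
  rw [tsum_congr hsplit, (hs.indicator A).tsum_add (hs.indicator (B \ A))]
  linarith

lemma abs_sub_max_zero_le {p : ℝ} (hp : 0 ≤ p) (a : ℝ) : |p - max a 0| ≤ |p - a| := by
  simpa [max_eq_left hp] using abs_max_sub_max_le_abs p a 0

lemma abs_sub_min_max_zero_le {p q : ℝ} (hp : p ∈ Icc 0 q) (a b : ℝ) :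
    |p - min (max a 0) b| ≤ |p - a| + |q - b| :=
  calc |p - min (max a 0) b| = |min (max p 0) q - min (max a 0) b| := by
        rw [max_eq_left hp.1, min_eq_left hp.2]
    _ ≤ max |max p 0 - max a 0| |q - b| := abs_min_sub_min_le_max _ _ _ _
    _ ≤ |p - a| + |q - b| :=
        max_le ((abs_max_sub_max_le_abs _ _ _).trans (le_add_of_nonneg_right (abs_nonneg _)))
          (le_add_of_nonneg_left (abs_nonneg _))

lemma abs_sub_le_sqrt_mul_sqrt {a b c δ : ℝ} (ha : a ∈ Icc 0 c) (hb : b ∈ Icc 0 c)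
    (h : |a - b| ≤ δ) : |a - b| ≤ √δ * √c := by
  have hc : |a - b| ≤ c := abs_sub_le_iff.2 ⟨by linarith [ha.2, hb.1], by linarith [ha.1, hb.2]⟩
  rw [← Real.sqrt_mul ((abs_nonneg _).trans h)]
  exact Real.le_sqrt_of_sq_le (by nlinarith [abs_nonneg (a - b)])

section BanachFunctionSpace

variable {X : Type*} [MeasurableSpace X] {μ : Measure X} {E : Type*}

structure IsIdealEmbedding [AddCommGroup E] [Module ℝ E] [LE E]
    (T : E →ₗ[ℝ] (X →ₘ[μ] ℝ)) : Prop where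
  le_iff : ∀ x y : E, x ≤ y ↔ T x ≤ T y
  mem_range_of_abs_le : ∀ f g : X →ₘ[μ] ℝ, g ∈ LinearMap.range T → |f| ≤ |g| →
    f ∈ LinearMap.range T

section Module

variable [AddCommGroup E] [Module ℝ E] (T : E →ₗ[ℝ] (X →ₘ[μ] ℝ))

lemma coeFn_map_zero : ⇑(T 0) =ᵐ[μ] 0 := by
  rw [map_zero]
  exact AEEqFun.coeFn_zero

variable {T} {u v : E} {φ ψ : X → ℝ}

lemma coeFn_map_add (hu : ⇑(T u) =ᵐ[μ] φ) (hv : ⇑(T v) =ᵐ[μ] ψ) :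
    ⇑(T (u + v)) =ᵐ[μ] φ + ψ := by
  rw [map_add]
  exact (AEEqFun.coeFn_add _ _).trans (hu.add hv)

lemma coeFn_map_sub (hu : ⇑(T u) =ᵐ[μ] φ) (hv : ⇑(T v) =ᵐ[μ] ψ) :
    ⇑(T (u - v)) =ᵐ[μ] φ - ψ := by
  rw [map_sub]
  exact (AEEqFun.coeFn_sub _ _).trans (hu.sub hv)

lemma coeFn_map_smul (a : ℝ) (hu : ⇑(T u) =ᵐ[μ] φ) : ⇑(T (a • u)) =ᵐ[μ] a • φ := by
  rw [map_smul]
  exact (AEEqFun.coeFn_smul _ _).trans (hu.const_smul a)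

namespace IsIdealEmbedding

variable [Lattice E]

lemma ae_le_of_le (hT : IsIdealEmbedding T) (h : u ≤ v) : ⇑(T u) ≤ᵐ[μ] ⇑(T v) :=
  AEEqFun.coeFn_le.2 ((hT.le_iff u v).1 h)

lemma ae_nonneg (hT : IsIdealEmbedding T) (hu : 0 ≤ u) : ∀ᵐ x ∂μ, 0 ≤ T u x := by
  filter_upwards [hT.ae_le_of_le hu, coeFn_map_zero T] with x hx h0
  rwa [h0] at hx

lemma le_of_ae_le (hT : IsIdealEmbedding T) (hu : ⇑(T u) =ᵐ[μ] φ) (hv : ⇑(T v) =ᵐ[μ] ψ)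
    (h : φ ≤ᵐ[μ] ψ) : u ≤ v :=
  (hT.le_iff u v).2 (AEEqFun.coeFn_le.1 ((hu.trans_le h).trans_eq hv.symm))

lemma exists_of_ae_abs_le (hT : IsIdealEmbedding T) (hφ : AEStronglyMeasurable φ μ)
    (hv : ⇑(T v) =ᵐ[μ] ψ) (h : ∀ᵐ x ∂μ, |φ x| ≤ |ψ x|) : ∃ u, ⇑(T u) =ᵐ[μ] φ := by
  have hle : |AEEqFun.mk φ hφ| ≤ |T v| := by
    rw [← AEEqFun.coeFn_le]
    filter_upwards [AEEqFun.coeFn_abs (AEEqFun.mk φ hφ), AEEqFun.coeFn_abs (T v),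
      AEEqFun.coeFn_mk φ hφ, hv, h] with x h₁ h₂ h₃ h₄ h₅
    rw [h₁, h₂, h₃, h₄]
    exact h₅
  obtain ⟨u, hu⟩ := hT.mem_range_of_abs_le _ _ ⟨v, rfl⟩ hle
  exact ⟨u, hu ▸ AEEqFun.coeFn_mk φ hφ⟩

lemma map_abs (hT : IsIdealEmbedding T) (u : E) : T |u| = |T u| := by
  have habs : |(|T u|)| ≤ |T u| := by
    rw [← AEEqFun.coeFn_le]
    filter_upwards [AEEqFun.coeFn_abs |T u|, AEEqFun.coeFn_abs (T u)] with x h₁ h₂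
    rw [h₁, h₂, abs_abs]
  obtain ⟨z, hz⟩ := hT.mem_range_of_abs_le _ _ ⟨u, rfl⟩ habs
  have huz : u ≤ z := (hT.le_iff _ _).2 (hz ▸ le_abs_self (T u))
  have hnuz : -u ≤ z := (hT.le_iff _ _).2 (by rw [map_neg, hz]; exact neg_le_abs (T u))
  refine le_antisymm (hz ▸ (hT.le_iff _ _).1 (abs_le'.2 ⟨huz, hnuz⟩)) (abs_le'.2 ⟨?_, ?_⟩)
  · exact (hT.le_iff _ _).1 (le_abs_self u)
  · rw [← map_neg]
    exact (hT.le_iff _ _).1 (neg_le_abs u)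

lemma coeFn_map_abs (hT : IsIdealEmbedding T) (hu : ⇑(T u) =ᵐ[μ] φ) :
    ⇑(T |u|) =ᵐ[μ] fun x => |φ x| := by
  rw [hT.map_abs]
  filter_upwards [AEEqFun.coeFn_abs (T u), hu] with x h₁ h₂
  rw [h₁, h₂]

lemma exists_subseriesSum (hT : IsIdealEmbedding T) {z : ℕ → E} {b : E} (hz : Monotone z)
    (hb : ∀ k, z k ≤ b) :
    ∃ s : Set ℕ → E, (∀ A, s A ∈ Icc 0 (b - z 0)) ∧
      ∀ A B, A ⊆ B → ∀ k ∈ B \ A, z (k + 1) - z k ≤ s B - s A := by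
  set a : X → ℕ → ℝ := fun x k => T (z (k + 1)) x - T (z k) x
  have hgood : ∀ᵐ x ∂μ, (∀ k, 0 ≤ a x k) ∧
      ∀ N, ∑ k ∈ Finset.range N, a x k ≤ T b x - T (z 0) x := by
    have hmono : ∀ᵐ x ∂μ, ∀ k, T (z k) x ≤ T (z (k + 1)) x :=
      ae_all_iff.2 fun k => hT.ae_le_of_le (hz k.le_succ)
    have hbound : ∀ᵐ x ∂μ, ∀ k, T (z k) x ≤ T b x :=
      ae_all_iff.2 fun k => hT.ae_le_of_le (hb k)
    filter_upwards [hmono, hbound] with x hx hxb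
    refine ⟨fun k => sub_nonneg.2 (hx k), fun N => ?_⟩
    rw [Finset.sum_range_sub (fun k => T (z k) x)]
    exact sub_le_sub_right (hxb N) _
  set Φ : Set ℕ → X → ℝ := fun A x => ∑' k, A.indicator (a x) k
  have hΦ : ∀ A, Measurable (Φ A) := fun A => Measurable.tsum fun k => by
    by_cases hk : k ∈ A
    · simp only [indicator_of_mem hk, a]
      exact (T (z (k + 1))).stronglyMeasurable.measurable.sub
        (T (z k)).stronglyMeasurable.measurable
    · simp only [indicator_of_notMem hk, measurable_const]
  have hΦ_mem : ∀ᵐ x ∂μ, ∀ A, Φ A x ∈ Icc 0 (T b x - T (z 0) x) := by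
    filter_upwards [hgood] with x ⟨h0, hN⟩ A
    have hA := tsum_indicator_mem_Icc h0 (summable_of_sum_range_le h0 hN) A
    exact ⟨hA.1, hA.2.trans (Real.tsum_le_of_sum_range_le h0 hN)⟩
  have hb0 : ⇑(T (b - z 0)) =ᵐ[μ] ⇑(T b) - ⇑(T (z 0)) :=
    coeFn_map_sub EventuallyEq.rfl EventuallyEq.rfl
  -- `Φ A` is squeezed between `0` and `T (b - z 0)`, so the ideal property puts it in `E`.
  choose s hs using fun A => hT.exists_of_ae_abs_le (hΦ A).aestronglyMeasurable hb0 (by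
    filter_upwards [hΦ_mem] with x hx
    rw [abs_of_nonneg (hx A).1, Pi.sub_apply, abs_of_nonneg ((hx A).1.trans (hx A).2)]
    exact (hx A).2)
  refine ⟨s, fun A => ⟨hT.le_of_ae_le (coeFn_map_zero T) (hs A) ?_,
    hT.le_of_ae_le (hs A) hb0 ?_⟩, fun A B hAB k hk => hT.le_of_ae_le
      (coeFn_map_sub EventuallyEq.rfl EventuallyEq.rfl) (coeFn_map_sub (hs B) (hs A)) ?_⟩
  · filter_upwards [hΦ_mem] with x hx using (hx A).1
  · filter_upwards [hΦ_mem] with x hx using (hx A).2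
  · filter_upwards [hgood] with x ⟨h0, hN⟩
    have := tsum_indicator_add_le h0 (summable_of_sum_range_le h0 hN) hAB hk
    simp only [Pi.sub_apply]
    linarith

end IsIdealEmbedding

end Module

namespace IsIdealEmbedding

variable [NormedAddCommGroup E] [Lattice E] [NormedSpace ℝ E]
  {T : E →ₗ[ℝ] (X →ₘ[μ] ℝ)} {u v w : E} {φ ψ ξ : X → ℝ}

lemma norm_le_norm_of_ae_abs_le [HasSolidNorm E] (hT : IsIdealEmbedding T)
    (hu : ⇑(T u) =ᵐ[μ] φ) (hv : ⇑(T v) =ᵐ[μ] ψ) (h : ∀ᵐ x ∂μ, |φ x| ≤ |ψ x|) : ‖u‖ ≤ ‖v‖ :=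
  norm_le_norm_of_abs_le_abs
    (hT.le_of_ae_le (hT.coeFn_map_abs hu) (hT.coeFn_map_abs hv) h)

lemma norm_le_add_norm_of_ae_abs_le [IsOrderedAddMonoid E] [HasSolidNorm E]
    (hT : IsIdealEmbedding T) (hu : ⇑(T u) =ᵐ[μ] φ) (hv : ⇑(T v) =ᵐ[μ] ψ)
    (hw : ⇑(T w) =ᵐ[μ] ξ) (h : ∀ᵐ x ∂μ, |φ x| ≤ |ψ x| + |ξ x|) : ‖u‖ ≤ ‖v‖ + ‖w‖ := by
  have hvw := coeFn_map_add (hT.coeFn_map_abs hv) (hT.coeFn_map_abs hw)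
  calc ‖u‖ ≤ ‖|v| + |w|‖ := hT.norm_le_norm_of_ae_abs_le hu hvw (by
        filter_upwards [h] with x hx
        simpa [abs_of_nonneg (add_nonneg (abs_nonneg (ψ x)) (abs_nonneg (ξ x)))] using hx)
    _ ≤ ‖|v|‖ + ‖|w|‖ := norm_add_le _ _
    _ = ‖v‖ + ‖w‖ := by rw [norm_abs_eq_norm, norm_abs_eq_norm]

lemma exists_separated_of_not_cauchySeq [IsOrderedAddMonoid E] [HasSolidNorm E]
    (hT : IsIdealEmbedding T) {x : ℕ → E} {b : E} (hx : Monotone x) (hxb : ∀ n, x n ≤ b)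
    (hcauchy : ¬ CauchySeq x) :
    ∃ c : E, ∃ ε > 0, ∃ s : ℝ → E, (∀ r, s r ∈ Icc 0 c) ∧
      Pairwise fun r r' => ε ≤ ‖s r - s r'‖ := by
  obtain ⟨ε, hε, n, hn, hgap⟩ := exists_monotone_norm_sub_ge_of_not_cauchySeq hcauchy
  obtain ⟨S, hS, hSsub⟩ := hT.exists_subseriesSum (hx.comp hn) fun k => hxb (n k)
  obtain ⟨q, hq⟩ := exists_surjective_nat ℚ
  set s : ℝ → E := fun r => S {k | (q k : ℝ) < r}
  have hsep : ∀ r r' : ℝ, r < r' → ε ≤ ‖s r' - s r‖ := by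
    intro r r' hr
    obtain ⟨p, hrp, hpr'⟩ := exists_rat_btwn hr
    obtain ⟨k, rfl⟩ := hq p
    have hinc : x (n (k + 1)) - x (n k) ≤ s r' - s r :=
      hSsub _ _ (fun i hi => lt_trans hi hr) k ⟨hpr', fun h => lt_asymm h hrp⟩
    have h0 : 0 ≤ x (n (k + 1)) - x (n k) := sub_nonneg.2 (hx (hn k.le_succ))
    refine (hgap k).trans (norm_le_norm_of_abs_le_abs ?_)
    rwa [abs_of_nonneg h0, abs_of_nonneg (h0.trans hinc)]
  refine ⟨_, ε, hε, s, fun r => hS _, fun r r' hrr' => ?_⟩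
  rcases hrr'.lt_or_gt with h | h
  · rw [norm_sub_rev]
    exact hsep r r' h
  · exact hsep r' r h

lemma norm_sub_le_sqrt_mul_norm [HasSolidNorm E] (hT : IsIdealEmbedding T)
    {f χ₁ χ₂ : X → ℝ} {t₁ t₂ w : E} {δ : ℝ} (h₁ : ∀ x, χ₁ x ∈ Icc 0 (f x))
    (h₂ : ∀ x, χ₂ x ∈ Icc 0 (f x)) (hδ : ∀ x, |χ₁ x - χ₂ x| ≤ δ)
    (ht₁ : ⇑(T t₁) =ᵐ[μ] χ₁) (ht₂ : ⇑(T t₂) =ᵐ[μ] χ₂) (hw : ⇑(T w) =ᵐ[μ] fun x => √(f x)) :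
    ‖t₁ - t₂‖ ≤ √δ * ‖w‖ := by
  have hle : ‖t₁ - t₂‖ ≤ ‖√δ • w‖ :=
    hT.norm_le_norm_of_ae_abs_le (coeFn_map_sub ht₁ ht₂) (coeFn_map_smul _ hw)
      (Eventually.of_forall fun x => by
        simpa [abs_mul, abs_of_nonneg (Real.sqrt_nonneg _)] using
          abs_sub_le_sqrt_mul_sqrt (h₁ x) (h₂ x) (hδ x))
  rwa [norm_smul, Real.norm_of_nonneg (Real.sqrt_nonneg _)] at hle

end IsIdealEmbedding

section Density

variable [TopologicalSpace X] [NormedAddCommGroup E] [NormedSpace ℝ E]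

def ContainsCc (T : E →ₗ[ℝ] (X →ₘ[μ] ℝ)) : Prop :=
  ∀ f : X → ℝ, Continuous f → HasCompactSupport f → ∃ e, ⇑(T e) =ᵐ[μ] f

def CcDense (T : E →ₗ[ℝ] (X →ₘ[μ] ℝ)) : Prop :=
  ∀ (u : E) (η : ℝ), 0 < η →
    ∃ e f, Continuous f ∧ HasCompactSupport f ∧ ⇑(T e) =ᵐ[μ] f ∧ ‖u - e‖ < η

namespace IsIdealEmbedding

variable [Lattice E] {T : E →ₗ[ℝ] (X →ₘ[μ] ℝ)}

lemma exists_nonneg_Cc_near [HasSolidNorm E] (hT : IsIdealEmbedding T) (hCc : ContainsCc T)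
    (hdense : CcDense T) {u : E} (hu : 0 ≤ u) {η : ℝ} (hη : 0 < η) :
    ∃ e f, Continuous f ∧ HasCompactSupport f ∧ 0 ≤ f ∧ ⇑(T e) =ᵐ[μ] f ∧ ‖u - e‖ < η := by
  obtain ⟨d, g, hg, hgc, hd, hud⟩ := hdense u η hη
  have hf : Continuous fun x => max (g x) 0 := hg.max continuous_const
  have hfc : HasCompactSupport fun x => max (g x) 0 :=
    hgc.comp_left (g := fun y => max y 0) (max_self 0)
  obtain ⟨e, he⟩ := hCc _ hf hfc
  refine ⟨e, _, hf, hfc, fun x => le_max_right _ _, he, lt_of_le_of_lt ?_ hud⟩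
  refine hT.norm_le_norm_of_ae_abs_le (coeFn_map_sub EventuallyEq.rfl he)
    (coeFn_map_sub EventuallyEq.rfl hd) ?_
  filter_upwards [hT.ae_nonneg hu] with x hx
  exact abs_sub_max_zero_le hx _

lemma exists_Cc_near_of_mem_Icc [IsOrderedAddMonoid E] [HasSolidNorm E]
    (hT : IsIdealEmbedding T) (hCc : ContainsCc T) (hdense : CcDense T) {u c e : E}
    {f : X → ℝ} (hu : u ∈ Icc 0 c) (hf : Continuous f) (hfc : HasCompactSupport f) (hf0 : 0 ≤ f)
    (he : ⇑(T e) =ᵐ[μ] f) {η : ℝ} (hη : 0 < η) :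
    ∃ t χ, Continuous χ ∧ (∀ x, χ x ∈ Icc 0 (f x)) ∧ ⇑(T t) =ᵐ[μ] χ ∧
      ‖u - t‖ < η + ‖c - e‖ := by
  obtain ⟨d, g, hg, -, hd, hud⟩ := hdense u η hη
  set χ : X → ℝ := fun x => min (max (g x) 0) (f x)
  have hχ : Continuous χ := (hg.max continuous_const).min hf
  have hχc : HasCompactSupport χ := hfc.mono fun x hx h0 => hx (by simp [χ, h0])
  obtain ⟨t, ht⟩ := hCc χ hχ hχc
  refine ⟨t, χ, hχ, fun x => ⟨le_min (le_max_right _ _) (hf0 x), min_le_right _ _⟩, ht, ?_⟩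
  have hle := hT.norm_le_add_norm_of_ae_abs_le (coeFn_map_sub EventuallyEq.rfl ht)
    (coeFn_map_sub EventuallyEq.rfl hd) (coeFn_map_sub EventuallyEq.rfl he) (by
      filter_upwards [hT.ae_nonneg hu.1, hT.ae_le_of_le hu.2] with x h0 hc
      exact abs_sub_min_max_zero_le ⟨h0, hc⟩ _ _)
  linarith

theorem exists_ne_norm_sub_lt_of_mem_Icc [IsOrderedAddMonoid E] [HasSolidNorm E]
    (hT : IsIdealEmbedding T) (hK : ∀ K : Set X, IsCompact K → TopologicalSpace.MetrizableSpace K)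
    (hCc : ContainsCc T) (hdense : CcDense T) {ι : Type*} [Uncountable ι] {c : E}
    {s : ι → E} (hs : ∀ i, s i ∈ Icc 0 c) {ε : ℝ} (hε : 0 < ε) :
    ∃ i j, i ≠ j ∧ ‖s i - s j‖ < ε := by
  obtain ⟨i₀⟩ : Nonempty ι := by
    by_contra h
    have := not_nonempty_iff.1 h
    exact not_countable (α := ι) inferInstance
  obtain ⟨e, f, hf, hfc, hf0, he, hce⟩ :=
    hT.exists_nonneg_Cc_near hCc hdense ((hs i₀).1.trans (hs i₀).2) (by positivity : 0 < ε / 8)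
  choose t χ hχ hχf ht hst using fun i =>
    hT.exists_Cc_near_of_mem_Icc hCc hdense (hs i) hf hfc hf0 he (by positivity : 0 < ε / 8)
  obtain ⟨w, hw⟩ := hCc _ hf.sqrt (hfc.comp_left Real.sqrt_zero)
  set η := ε / (4 * (‖w‖ + 1))
  have hη : 0 < η := by positivity
  have : CompactSpace (tsupport f) := isCompact_iff_compactSpace.1 hfc
  have := hK _ hfc
  obtain ⟨i, j, hij, hdist⟩ := exists_ne_dist_lt_of_uncountable
    (fun i => (ContinuousMap.mk (χ i) (hχ i)).restrict (tsupport f)) (pow_pos hη 2)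
  have hclose : ∀ x, |χ i x - χ j x| ≤ η ^ 2 := by
    intro x
    by_cases hx : x ∈ tsupport f
    · rw [← Real.dist_eq]
      exact (ContinuousMap.dist_apply_le_dist (⟨x, hx⟩ : tsupport f)).trans hdist.le
    · have hi := hχf i x
      have hj := hχf j x
      rw [image_eq_zero_of_notMem_tsupport hx] at hi hj
      rw [le_antisymm hi.2 hi.1, le_antisymm hj.2 hj.1, sub_zero, abs_zero]
      positivity
  have htt := hT.norm_sub_le_sqrt_mul_norm (hχf i) (hχf j) hclose (ht i) (ht j) hw
  rw [Real.sqrt_sq hη.le] at htt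
  have hηw : η * ‖w‖ ≤ ε / 4 := by
    rw [div_mul_eq_mul_div, div_le_iff₀ (by positivity)]
    nlinarith [norm_nonneg w]
  refine ⟨i, j, hij, ?_⟩
  linarith [norm_sub_le_norm_sub_add_norm_sub (s i) (t i) (s j),
    norm_sub_le_norm_sub_add_norm_sub (t i) (t j) (s j), hst i, hst j, norm_sub_rev (t j) (s j)]

end IsIdealEmbedding

end Density

end BanachFunctionSpace

/-- Let `X` be a topological space all of whose compact subsets are
metrizable, let the σ-algebra on `X` make all continuous compactly supported functions
measurable, and let `μ` be a measure. If `E` is a Banach function space over `(X, μ)`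
(realized by a linear order embedding `T` of the Banach lattice `E` onto an order ideal of
`L⁰ = X →ₘ[μ] ℝ`) which contains the classes of the continuous compactly supported
functions as a dense subspace, then `E` has order continuous norm. -/
theorem banachFunctionSpace_orderContinuous
    {X : Type*} [TopologicalSpace X] [MeasurableSpace X]
    (μ : Measure X)
    (hK : ∀ K : Set X, IsCompact K → TopologicalSpace.MetrizableSpace K)
    (hmeas : ∀ f : X → ℝ, Continuous f → HasCompactSupport f → Measurable f)
    {E : Type*} [NormedAddCommGroup E] [Lattice E] [HasSolidNorm E]
      [IsOrderedAddMonoid E] [NormedSpace ℝ E] [CompleteSpace E]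
    (T : E →ₗ[ℝ] (X →ₘ[μ] ℝ))
    (hT_ord : ∀ x y : E, x ≤ y ↔ T x ≤ T y)
    (hT_ideal : ∀ f g : X →ₘ[μ] ℝ, g ∈ LinearMap.range T → |f| ≤ |g| →
      f ∈ LinearMap.range T)
    (hCc_sub : ∀ (f : X → ℝ) (hf : Continuous f) (hfc : HasCompactSupport f),
      AEEqFun.mk f ((hmeas f hf hfc).aestronglyMeasurable) ∈ LinearMap.range T)
    (hdense : Dense {e : E | ∃ (f : X → ℝ) (hf : Continuous f) (hfc : HasCompactSupport f),
      T e = AEEqFun.mk f ((hmeas f hf hfc).aestronglyMeasurable)}) :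
    ∀ (x : ℕ → E) (b : E), Monotone x → (∀ n, x n ≤ b) →
      ∃ l : E, Tendsto x atTop (nhds l) := by
  have hT : IsIdealEmbedding T := ⟨hT_ord, hT_ideal⟩
  have hCc : ContainsCc T := by
    intro f hf hfc
    obtain ⟨e, he⟩ := hCc_sub f hf hfc
    exact ⟨e, he ▸ AEEqFun.coeFn_mk _ _⟩
  have hCc_dense : CcDense T := by
    intro u η hη
    obtain ⟨e, hue, f, hf, hfc, he⟩ := Metric.dense_iff.1 hdense u η hη
    refine ⟨e, f, hf, hfc, he ▸ AEEqFun.coeFn_mk _ _, ?_⟩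
    rwa [← dist_eq_norm, dist_comm]
  intro x b hx hxb
  by_contra hconv
  obtain ⟨c, ε, hε, s, hs, hsep⟩ := hT.exists_separated_of_not_cauchySeq hx hxb
    fun hcauchy => hconv (cauchySeq_tendsto_of_complete hcauchy)
  obtain ⟨r, r', hrr', hlt⟩ := hT.exists_ne_norm_sub_lt_of_mem_Icc hK hCc hCc_dense hs hε
  exact (hsep hrr').not_gt hlt
end
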